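/- arXiv:1412.3519 — 7 statements merged into one kernel-verified Lean document; each statement's English description precedes it below -/
import Mathlib

section
/- Let N ≥ 2, β > 0, and let K = {v ∈ C[0,1] : v(t) ≥ 0 for all t, and min_{1/4 ≤ t ≤ 3/4} v(t) ≥ (1/4)‖v‖}. Define Γ = ∫_{1/4}^{3/4} (∫_{1/4}^s N τ^{N-1} dτ)^{1/N} ds and T₂(v)(t) = ∫_t^1 (∫_0^s N τ^{N-1} v(τ)^β dτ)^{1/N} ds. Then for every v ∈ K, ‖T₂(v)‖ ≥ Γ · ((1/4)‖v‖)^{β/N}. -/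
open Set

/-- Supremum norm on `C[0,1]`. -/
noncomputable def supNorm (v : ℝ → ℝ) : ℝ :=
  sSup ((fun t => |v t|) '' Icc (0:ℝ) 1)

/-- Membership in the cone `K ⊂ C[0,1]`. -/
def memK (v : ℝ → ℝ) : Prop :=
  ContinuousOn v (Icc (0:ℝ) 1) ∧ (∀ t ∈ Icc (0:ℝ) 1, 0 ≤ v t) ∧
    ∀ t ∈ Icc (1/4 : ℝ) (3/4), (1/4) * supNorm v ≤ v t

/-- The solution operator `T₂` with exponent `β`. -/
noncomputable def T2op (N : ℕ) (β : ℝ) (v : ℝ → ℝ) : ℝ → ℝ :=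
  fun t => ∫ s in t..(1:ℝ),
    (∫ τ in (0:ℝ)..s, (N:ℝ) * τ ^ (N - 1) * v τ ^ β) ^ ((N:ℝ)⁻¹)

/-- The constant `Γ`. -/
noncomputable def Gam (N : ℕ) : ℝ :=
  ∫ s in (1/4 : ℝ)..(3/4), (∫ τ in (1/4 : ℝ)..s, (N:ℝ) * τ ^ (N - 1)) ^ ((N:ℝ)⁻¹)

theorem stmt1 (N : ℕ) (hN : 2 ≤ N) (β : ℝ) (hβ : 0 < β)
    (v : ℝ → ℝ) (hv : memK v) :
    Gam N * ((1/4) * supNorm v) ^ (β / N) ≤ supNorm (T2op N β v) := by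
  obtain ⟨hvc, hv0, hvK⟩ := hv
  set c : ℝ := (1/4) * supNorm v with hcdef
  -- supNorm v ≥ 0, hence c ≥ 0
  have hbdd : BddAbove ((fun t => |v t|) '' Icc (0:ℝ) 1) :=
    (isCompact_Icc.image_of_continuousOn hvc.abs).bddAbove
  have hsn : 0 ≤ supNorm v :=
    le_trans (abs_nonneg (v 0)) (le_csSup hbdd ⟨0, by norm_num, rfl⟩)
  have hc0 : 0 ≤ c := by positivity
  -- continuity of rpow maps
  have hrpow : ∀ q : ℝ, 0 ≤ q → Continuous fun x : ℝ => x ^ q := by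
    intro q hq
    exact continuous_iff_continuousAt.2 fun x => Real.continuousAt_rpow_const x q (Or.inr hq)
  have hNinv : (0:ℝ) ≤ (N:ℝ)⁻¹ := by positivity
  -- the inner integrand
  set g : ℝ → ℝ := fun τ => (N:ℝ) * τ ^ (N - 1) * v τ ^ β with hgdef
  have hgcont : ContinuousOn g (Icc 0 1) :=
    ((continuous_const.mul (continuous_pow _)).continuousOn.mul
      ((hrpow β hβ.le).comp_continuousOn hvc))
  have hgnn : ∀ τ ∈ Icc (0:ℝ) 1, 0 ≤ g τ := by
    intro τ hτ
    have h1 : (0:ℝ) ≤ (N:ℝ) * τ ^ (N - 1) :=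
      mul_nonneg (Nat.cast_nonneg N) (pow_nonneg hτ.1 _)
    exact mul_nonneg h1 (Real.rpow_nonneg (hv0 τ hτ) β)
  have hgint : ∀ a b : ℝ, a ∈ Icc (0:ℝ) 1 → b ∈ Icc (0:ℝ) 1 →
      IntervalIntegrable g MeasureTheory.volume a b := by
    intro a b ha hb
    exact (hgcont.mono (uIcc_subset_Icc ha hb)).intervalIntegrable
  set F : ℝ → ℝ := fun s => ∫ τ in (0:ℝ)..s, g τ with hFdef
  have hFnn : ∀ s ∈ Icc (0:ℝ) 1, 0 ≤ F s := by
    intro s hs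
    exact intervalIntegral.integral_nonneg hs.1 fun u hu =>
      hgnn u ⟨hu.1, hu.2.trans hs.2⟩
  set h : ℝ → ℝ := fun s => F s ^ ((N:ℝ)⁻¹) with hhdef
  have hFcont : ContinuousOn F (Icc 0 1) := by
    have := intervalIntegral.continuousOn_primitive_interval (a := 0) (b := 1)
      (f := g) (μ := MeasureTheory.volume)
      (by rw [uIcc_of_le (by norm_num : (0:ℝ) ≤ 1)]; exact hgcont.integrableOn_Icc)
    rwa [uIcc_of_le (by norm_num : (0:ℝ) ≤ 1)] at this
  have hhcont : ContinuousOn h (Icc 0 1) := (hrpow _ hNinv).comp_continuousOn hFcont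
  have hhint : ∀ a b : ℝ, a ∈ Icc (0:ℝ) 1 → b ∈ Icc (0:ℝ) 1 →
      IntervalIntegrable h MeasureTheory.volume a b := fun a b ha hb =>
    (hhcont.mono (uIcc_subset_Icc ha hb)).intervalIntegrable
  have hhnn : ∀ s ∈ Icc (0:ℝ) 1, 0 ≤ h s := fun s hs =>
    Real.rpow_nonneg (hFnn s hs) _
  -- the comparison integrand
  set A : ℝ → ℝ := fun s => ∫ τ in (1/4:ℝ)..s, (N:ℝ) * τ ^ (N - 1) with hAdef
  have hpcont : Continuous fun τ : ℝ => (N:ℝ) * τ ^ (N - 1) :=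
    continuous_const.mul (continuous_pow _)
  have hAnn : ∀ s ∈ Icc (1/4:ℝ) (3/4), 0 ≤ A s := by
    intro s hs
    exact intervalIntegral.integral_nonneg hs.1 fun u hu => by
      have : (0:ℝ) ≤ u := le_trans (by norm_num) hu.1
      positivity
  -- key pointwise bound on [1/4, 3/4]
  have hkey : ∀ s ∈ Icc (1/4:ℝ) (3/4),
      c ^ (β / N) * A s ^ ((N:ℝ)⁻¹) ≤ h s := by
    intro s hs
    have hs01 : s ∈ Icc (0:ℝ) 1 := ⟨le_trans (by norm_num) hs.1, le_trans hs.2 (by norm_num)⟩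
    have hq14 : (1/4:ℝ) ∈ Icc (0:ℝ) 1 := by norm_num
    have hsplit : F (1/4) + ∫ τ in (1/4:ℝ)..s, g τ = F s :=
      intervalIntegral.integral_add_adjacent_intervals (hgint 0 (1/4) (by norm_num) hq14)
        (hgint (1/4) s hq14 hs01)
    have hF14 : 0 ≤ F (1/4) := hFnn _ hq14
    have hmono : c ^ β * A s ≤ ∫ τ in (1/4:ℝ)..s, g τ := by
      rw [← intervalIntegral.integral_const_mul]
      refine intervalIntegral.integral_mono_on hs.1
        ((continuous_const.mul hpcont).continuousOn.intervalIntegrable)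
        (hgint (1/4) s hq14 hs01) ?_
      intro x hx
      have hx01 : x ∈ Icc (0:ℝ) 1 :=
        ⟨le_trans (by norm_num) hx.1, le_trans hx.2 (le_trans hs.2 (by norm_num))⟩
      have hxK : x ∈ Icc (1/4:ℝ) (3/4) := ⟨hx.1, hx.2.trans hs.2⟩
      have hcv : c ^ β ≤ v x ^ β := Real.rpow_le_rpow hc0 (hvK x hxK) hβ.le
      have hp : (0:ℝ) ≤ (N:ℝ) * x ^ (N - 1) := by
        have : (0:ℝ) ≤ x := hx01.1
        positivity
      calc c ^ β * ((N:ℝ) * x ^ (N - 1)) = (N:ℝ) * x ^ (N - 1) * c ^ β := by ring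
        _ ≤ (N:ℝ) * x ^ (N - 1) * v x ^ β := mul_le_mul_of_nonneg_left hcv hp
    have hFA : c ^ β * A s ≤ F s := by
      rw [← hsplit]; linarith
    have h1 : (c ^ β * A s) ^ ((N:ℝ)⁻¹) ≤ h s :=
      Real.rpow_le_rpow (mul_nonneg (Real.rpow_nonneg hc0 β) (hAnn s hs)) hFA hNinv
    calc c ^ (β / N) * A s ^ ((N:ℝ)⁻¹)
        = (c ^ β) ^ ((N:ℝ)⁻¹) * A s ^ ((N:ℝ)⁻¹) := by
          rw [← Real.rpow_mul hc0, ← div_eq_mul_inv]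
      _ = (c ^ β * A s) ^ ((N:ℝ)⁻¹) :=
          (Real.mul_rpow (Real.rpow_nonneg hc0 β) (hAnn s hs)).symm
      _ ≤ h s := h1
  -- lower bound for T2op v (1/4)
  have hq14 : (1/4:ℝ) ∈ Icc (0:ℝ) 1 := by norm_num
  have hq34 : (3/4:ℝ) ∈ Icc (0:ℝ) 1 := by norm_num
  have hT14 : Gam N * c ^ (β / N) ≤ T2op N β v (1/4) := by
    have hAcont : ContinuousOn (fun s => A s ^ ((N:ℝ)⁻¹)) (Icc (1/4:ℝ) (3/4)) := by
      have : ContinuousOn A (Icc (1/4:ℝ) (3/4)) := by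
        have := intervalIntegral.continuousOn_primitive_interval (a := (1/4:ℝ)) (b := (3/4:ℝ))
          (f := fun τ : ℝ => (N:ℝ) * τ ^ (N - 1)) (μ := MeasureTheory.volume)
          (hpcont.continuousOn.integrableOn_uIcc)
        rwa [uIcc_of_le (by norm_num : (1/4:ℝ) ≤ 3/4)] at this
      exact (hrpow _ hNinv).comp_continuousOn this
    have hsplit : (∫ s in (1/4:ℝ)..(3/4), h s) + ∫ s in (3/4:ℝ)..1, h s
        = ∫ s in (1/4:ℝ)..1, h s :=
      intervalIntegral.integral_add_adjacent_intervals (hhint _ _ hq14 hq34)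
        (hhint _ _ hq34 (by norm_num))
    have htail : 0 ≤ ∫ s in (3/4:ℝ)..1, h s :=
      intervalIntegral.integral_nonneg (by norm_num) fun u hu =>
        hhnn u ⟨le_trans (by norm_num) hu.1, hu.2⟩
    have hmid : c ^ (β / N) * Gam N ≤ ∫ s in (1/4:ℝ)..(3/4), h s := by
      rw [Gam, ← intervalIntegral.integral_const_mul]
      have hIcc : uIcc (1/4:ℝ) (3/4) = Icc (1/4:ℝ) (3/4) := uIcc_of_le (by norm_num)
      exact intervalIntegral.integral_mono_on (by norm_num)
        (((continuousOn_const.mul hAcont).mono hIcc.subset).intervalIntegrable)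
        (hhint _ _ hq14 hq34) hkey
    have : T2op N β v (1/4) = ∫ s in (1/4:ℝ)..1, h s := rfl
    rw [this, ← hsplit, mul_comm]
    linarith
  -- supNorm bound
  have hT14nn : 0 ≤ T2op N β v (1/4) :=
    intervalIntegral.integral_nonneg (by norm_num) fun u hu =>
      hhnn u ⟨le_trans (by norm_num) hu.1, hu.2⟩
  have hbdd2 : BddAbove ((fun t => |T2op N β v t|) '' Icc (0:ℝ) 1) := by
    refine ⟨∫ s in (0:ℝ)..1, |h s|, ?_⟩
    rintro x ⟨t, ht, rfl⟩
    have h1 : |T2op N β v t| ≤ ∫ s in t..1, |h s| :=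
      intervalIntegral.abs_integral_le_integral_abs ht.2
    have h2 : (∫ s in (0:ℝ)..t, |h s|) + ∫ s in t..1, |h s| = ∫ s in (0:ℝ)..1, |h s| :=
      intervalIntegral.integral_add_adjacent_intervals (hhint 0 t (by norm_num) ht).abs
        (hhint t 1 ht (by norm_num)).abs
    have h3 : 0 ≤ ∫ s in (0:ℝ)..t, |h s| :=
      intervalIntegral.integral_nonneg ht.1 fun u _ => abs_nonneg _
    simp only [upperBounds, mem_setOf_eq]
    linarith
  have hfin : T2op N β v (1/4) ≤ supNorm (T2op N β v) := by
    have := le_csSup hbdd2 (⟨1/4, hq14, rfl⟩ :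
      |T2op N β v (1/4)| ∈ (fun t => |T2op N β v t|) '' Icc (0:ℝ) 1)
    rwa [abs_of_nonneg hT14nn] at this
  exact le_trans hT14 (le_trans hfin (le_refl _))
end

section
/- Let N ≥ 2 and α, β > 0 with αβ = N². Define T₁(v)(t) = ∫_t^1 (∫_0^s N τ^{N-1} v(τ)^α dτ)^{1/N} ds, T₂ analogously with exponent β, T = T₁ ∘ T₂, and let K = {v ∈ C[0,1] : v ≥ 0, min_{[1/4,3/4]} v ≥ (1/4)‖v‖}. Then T has no fixed point v ∈ K with v ≠ 0. Hence, the radial Monge-Ampère system det D²u₁ = (−u₂)^α, det D²u₂ = (−u₁)^β on the unit ball B ⊂ ℝ^N with u₁ = u₂ = 0 on ∂B and u₁, u₂ < 0 in B admits no radial convex solution. -/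
/-!
Write `T_γ` for `MAop N γ`. On a ray `r ↦ r e`, a radial solution `u` of `det D²u = (-w) ^ γ` has
profile `φ(r) = u(r e)` with `det D²u = φ'' (φ' / r) ^ (N - 1)`, that is
`(φ' ^ N)' = N r ^ (N - 1) (-w) ^ γ`. As `φ` is even and convex, `φ'(0) = 0` and `φ' ≥ 0`; with
`φ(1) = 0`, integrating twice gives `-u = T_γ (-w)` on the ray. A radial solution of the system
thus gives a nonzero fixed point `v = -u₁ ≥ 0` of `T_α ∘ T_β`. But `T_γ` maps functions with values
in `[0, M]` to functions bounded by `M ^ (γ / N) / 2`, so for `αβ = N²` the sup norm of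
`T_α (T_β v)` is at most `‖v‖ / (2 · 2 ^ (α / N)) < ‖v‖`.
-/
open Set

/-- The solution operator with exponent `γ`. -/
noncomputable def MAop (N : ℕ) (γ : ℝ) (v : ℝ → ℝ) : ℝ → ℝ :=
  fun t => ∫ s in t..(1:ℝ),
    (∫ τ in (0:ℝ)..s, (N:ℝ) * τ ^ (N - 1) * v τ ^ γ) ^ ((N:ℝ)⁻¹)

/-- Determinant of the Hessian matrix of `u` at `x`. -/
noncomputable def hessDet {n : ℕ} (u : EuclideanSpace ℝ (Fin n) → ℝ)
    (x : EuclideanSpace ℝ (Fin n)) : ℝ :=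
  (Matrix.of fun i j : Fin n =>
    iteratedFDeriv ℝ 2 u x ![EuclideanSpace.single i (1:ℝ), EuclideanSpace.single j (1:ℝ)]).det

open MeasureTheory intervalIntegral Filter Topology

lemma abs_le_supNorm {v : ℝ → ℝ} (hv : ContinuousOn v (Icc 0 1)) {t : ℝ}
    (ht : t ∈ Icc (0:ℝ) 1) : |v t| ≤ supNorm v :=
  le_csSup (isCompact_Icc.image_of_continuousOn hv.abs).bddAbove (mem_image_of_mem _ ht)

lemma supNorm_le {v : ℝ → ℝ} {M : ℝ} (h : ∀ t ∈ Icc (0:ℝ) 1, |v t| ≤ M) : supNorm v ≤ M :=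
  csSup_le ((nonempty_Icc.2 zero_le_one).image _) (forall_mem_image.2 h)

lemma intervalIntegral_mono_of_nonneg {f g : ℝ → ℝ} {a b : ℝ} (hab : a ≤ b)
    (hf : ∀ x ∈ Icc a b, 0 ≤ f x) (hfg : ∀ x ∈ Icc a b, f x ≤ g x)
    (hg : IntervalIntegrable g volume a b) : ∫ x in a..b, f x ≤ ∫ x in a..b, g x := by
  rw [integral_of_le hab, integral_of_le hab]
  exact setIntegral_mono_of_nonneg (fun x hx => hf x (Ioc_subset_Icc_self hx))
    (fun x hx => hfg x (Ioc_subset_Icc_self hx)) hg.1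

noncomputable def MAinner (N : ℕ) (γ : ℝ) (v : ℝ → ℝ) (s : ℝ) : ℝ :=
  ∫ τ in (0:ℝ)..s, (N:ℝ) * τ ^ (N - 1) * v τ ^ γ

section MAop

variable {N : ℕ} {γ : ℝ} {f : ℝ → ℝ}

lemma MAop_eq_integral_MAinner (t : ℝ) :
    MAop N γ f t = ∫ s in t..1, MAinner N γ f s ^ (N:ℝ)⁻¹ := rfl

lemma MAop_congr {g : ℝ → ℝ} (h : EqOn f g (Icc 0 1)) {t : ℝ} (ht : t ∈ Icc (0:ℝ) 1) :
    MAop N γ f t = MAop N γ g t := by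
  refine integral_congr fun s hs => congrArg (· ^ (N:ℝ)⁻¹) (integral_congr fun τ hτ => ?_)
  rw [uIcc_of_le ht.2] at hs
  rw [uIcc_of_le (ht.1.trans hs.1)] at hτ
  simp only [h ⟨hτ.1, hτ.2.trans hs.2⟩]

lemma MAinner_nonneg (hf : ∀ τ ∈ Icc (0:ℝ) 1, 0 ≤ f τ) {s : ℝ} (hs : s ∈ Icc (0:ℝ) 1) :
    0 ≤ MAinner N γ f s :=
  integral_nonneg hs.1 fun τ hτ => by
    have := hf τ ⟨hτ.1, hτ.2.trans hs.2⟩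
    have := hτ.1
    positivity

lemma MAop_nonneg (hf : ∀ τ ∈ Icc (0:ℝ) 1, 0 ≤ f τ) {t : ℝ} (ht : t ∈ Icc (0:ℝ) 1) :
    0 ≤ MAop N γ f t :=
  integral_nonneg ht.2 fun _ hs => Real.rpow_nonneg (MAinner_nonneg hf ⟨ht.1.trans hs.1, hs.2⟩) _

lemma MAinner_le (hN : N ≠ 0) (hγ : 0 ≤ γ) {M : ℝ} (hf : ∀ τ ∈ Icc (0:ℝ) 1, 0 ≤ f τ ∧ f τ ≤ M)
    {s : ℝ} (hs : s ∈ Icc (0:ℝ) 1) : MAinner N γ f s ≤ s ^ N * M ^ γ := by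
  have hweight : ∫ τ in (0:ℝ)..s, (N:ℝ) * τ ^ (N - 1) * M ^ γ = s ^ N * M ^ γ := by
    obtain ⟨n, rfl⟩ := Nat.exists_eq_succ_of_ne_zero hN
    simp only [Nat.succ_sub_one, intervalIntegral.integral_mul_const,
      intervalIntegral.integral_const_mul, integral_pow]
    push_cast
    field_simp
    ring
  rw [MAinner, ← hweight]
  refine intervalIntegral_mono_of_nonneg hs.1 (fun τ hτ => ?_) (fun τ hτ => ?_)
    (by apply Continuous.intervalIntegrable; fun_prop)
  · have := (hf τ ⟨hτ.1, hτ.2.trans hs.2⟩).1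
    have := hτ.1
    positivity
  · obtain ⟨hfτ, hfM⟩ := hf τ ⟨hτ.1, hτ.2.trans hs.2⟩
    have := hτ.1
    gcongr

lemma MAop_le (hN : N ≠ 0) (hγ : 0 ≤ γ) {M : ℝ} (hf : ∀ τ ∈ Icc (0:ℝ) 1, 0 ≤ f τ ∧ f τ ≤ M)
    {t : ℝ} (ht : t ∈ Icc (0:ℝ) 1) : MAop N γ f t ≤ M ^ (γ / N) / 2 := by
  have hM : 0 ≤ M := (hf 0 ⟨le_rfl, zero_le_one⟩).elim le_trans
  have hinner : ∀ s ∈ Icc t 1, MAinner N γ f s ^ (N:ℝ)⁻¹ ≤ s * M ^ (γ / N) := by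
    intro s hs
    have hs' : s ∈ Icc (0:ℝ) 1 := ⟨ht.1.trans hs.1, hs.2⟩
    calc MAinner N γ f s ^ (N:ℝ)⁻¹ ≤ (s ^ N * M ^ γ) ^ (N:ℝ)⁻¹ := by
          gcongr
          · exact MAinner_nonneg (fun τ hτ => (hf τ hτ).1) hs'
          · exact MAinner_le hN hγ hf hs'
      _ = s * M ^ (γ / N) := by
          rw [Real.mul_rpow (pow_nonneg hs'.1 N) (Real.rpow_nonneg hM γ),
            Real.pow_rpow_inv_natCast hs'.1 hN, ← Real.rpow_mul hM, div_eq_mul_inv]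
  calc MAop N γ f t ≤ ∫ s in t..1, s * M ^ (γ / N) :=
        intervalIntegral_mono_of_nonneg ht.2
          (fun s hs => Real.rpow_nonneg
            (MAinner_nonneg (fun τ hτ => (hf τ hτ).1) ⟨ht.1.trans hs.1, hs.2⟩) _)
          hinner (by apply Continuous.intervalIntegrable; fun_prop)
    _ = (1 - t ^ 2) / 2 * M ^ (γ / N) := by
        rw [intervalIntegral.integral_mul_const, integral_id]
        ring
    _ ≤ M ^ (γ / N) / 2 := by
        have := ht.1
        have : 0 ≤ M ^ (γ / N) := by positivity
        nlinarith

theorem eqOn_zero_of_MAop_comp_fixed {α β : ℝ} (hN : N ≠ 0) (hα : 0 ≤ α) (hβ : 0 ≤ β)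
    (hαβ : α * β = (N:ℝ) ^ 2) {v : ℝ → ℝ} (hvc : ContinuousOn v (Icc 0 1))
    (hv : ∀ t ∈ Icc (0:ℝ) 1, 0 ≤ v t)
    (hfix : EqOn (MAop N α (MAop N β v)) v (Icc 0 1)) : EqOn v 0 (Icc 0 1) := by
  set M := supNorm v
  have hvM : ∀ t ∈ Icc (0:ℝ) 1, 0 ≤ v t ∧ v t ≤ M :=
    fun t ht => ⟨hv t ht, (le_abs_self _).trans (abs_le_supNorm hvc ht)⟩
  have hM : 0 ≤ M := (hvM 0 ⟨le_rfl, zero_le_one⟩).elim le_trans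
  have hw : ∀ t ∈ Icc (0:ℝ) 1, 0 ≤ MAop N β v t ∧ MAop N β v t ≤ M ^ (β / N) / 2 :=
    fun t ht => ⟨MAop_nonneg hv ht, MAop_le hN hβ hvM ht⟩
  have hcontract : (M ^ (β / N) / 2) ^ (α / N) / 2 = M / (2 * 2 ^ (α / N)) := by
    have hexp : β / N * (α / N) = 1 := by
      field_simp
      linarith
    rw [Real.div_rpow (by positivity) zero_le_two, ← Real.rpow_mul hM, hexp, Real.rpow_one]
    ring
  have hMle : M ≤ M / (2 * 2 ^ (α / N)) := supNorm_le fun t ht => by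
    rw [abs_of_nonneg (hv t ht), ← hfix ht, ← hcontract]
    exact MAop_le hN hα hw ht
  have hM0 : M ≤ 0 := by
    have h1 : 1 ≤ (2:ℝ) ^ (α / N) := Real.one_le_rpow one_le_two (by positivity)
    rw [le_div_iff₀ (by positivity)] at hMle
    nlinarith
  exact fun t ht => le_antisymm ((hvM t ht).2.trans hM0) (hv t ht)

theorem MAop_eq_sub_of_ode (hN : N ≠ 0) (hγ : 0 ≤ γ) {φ g g' h : ℝ → ℝ}
    (hφc : ContinuousOn φ (Icc 0 1)) (hφ : ∀ r ∈ Ioo (0:ℝ) 1, HasDerivAt φ (g r) r)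
    (hg : ∀ r ∈ Ico (0:ℝ) 1, HasDerivAt g (g' r) r) (hg0 : g 0 = 0)
    (hg_nonneg : ∀ r ∈ Ioo (0:ℝ) 1, 0 ≤ g r)
    (hode : ∀ r ∈ Ioo (0:ℝ) 1, g' r * (g r / r) ^ (N - 1) = h r ^ γ)
    (hh : ContinuousOn h (Icc 0 1)) : EqOn (MAop N γ h) (fun t => φ 1 - φ t) (Icc 0 1) := by
  have hfc : ContinuousOn (fun τ => (N:ℝ) * τ ^ (N - 1) * h τ ^ γ) (Icc 0 1) :=
    (continuous_const.mul (continuous_pow _)).continuousOn.mul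
      (hh.rpow_const fun _ _ => Or.inr hγ)
  have hinner_cont : ContinuousOn (MAinner N γ h) (Icc 0 1) := by
    have := continuousOn_primitive_interval (μ := volume) (a := 0) (b := 1)
      (by rw [uIcc_of_le zero_le_one]; exact hfc.integrableOn_Icc)
    rwa [uIcc_of_le zero_le_one] at this
  have hinner : ∀ s ∈ Ioo (0:ℝ) 1, MAinner N γ h s = g s ^ N := by
    intro s hs
    have hsub : Icc 0 s ⊆ Icc (0:ℝ) 1 := Icc_subset_Icc le_rfl hs.2.le
    rw [MAinner, integral_eq_sub_of_hasDerivAt_of_le hs.1.le (f := fun r => g r ^ N)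
      (fun r hr => ((hg r ⟨hr.1, hr.2.trans_lt hs.2⟩).continuousAt.pow N).continuousWithinAt)
      (fun r hr => ?_) ((hfc.mono hsub).intervalIntegrable_of_Icc hs.1.le),
      hg0, zero_pow hN, sub_zero]
    have hr' : r ∈ Ioo (0:ℝ) 1 := ⟨hr.1, hr.2.trans hs.2⟩
    refine ((hg r (Ioo_subset_Ico_self hr')).pow N).congr_deriv ?_
    rw [← hode r hr', div_pow]
    field_simp [hr.1.ne']
  have hroot : ∀ s ∈ Ioo (0:ℝ) 1, MAinner N γ h s ^ (N:ℝ)⁻¹ = g s := fun s hs => by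
    rw [hinner s hs, Real.pow_rpow_inv_natCast (hg_nonneg s hs) hN]
  intro t ht
  rw [MAop_eq_integral_MAinner]
  refine integral_eq_sub_of_hasDerivAt_of_le ht.2 (hφc.mono (Icc_subset_Icc ht.1 le_rfl))
    (fun s hs => hroot s ⟨ht.1.trans_lt hs.1, hs.2⟩ ▸ hφ s ⟨ht.1.trans_lt hs.1, hs.2⟩) ?_
  exact ((hinner_cont.mono (Icc_subset_Icc ht.1 le_rfl)).rpow_const
    fun _ _ => Or.inr (by positivity)).intervalIntegrable_of_Icc ht.2

end MAop

section Radial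

open scoped RealInnerProductSpace

variable {E : Type*} [NormedAddCommGroup E] [InnerProductSpace ℝ E]

theorem hasFDerivAt_norm_of_ne_zero {x : E} (hx : x ≠ 0) :
    HasFDerivAt (fun y : E => ‖y‖) (‖x‖⁻¹ • innerSL ℝ x) x := by
  have hsq : HasFDerivAt (fun y : E => ‖y‖ ^ 2) ((2:ℕ) • innerSL ℝ x) x :=
    (hasStrictFDerivAt_norm_sq x).hasFDerivAt
  have hsqrt :=
    (Real.hasDerivAt_sqrt (pow_ne_zero 2 (norm_ne_zero_iff.2 hx))).comp_hasFDerivAt x hsq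
  simp only [Function.comp_def, Real.sqrt_sq (norm_nonneg _)] at hsqrt
  refine hsqrt.congr_fderiv ?_
  rw [← Nat.cast_smul_eq_nsmul ℝ, smul_smul, Nat.cast_ofNat]
  congr 1
  field_simp

theorem iteratedFDeriv_two_radial {u : E → ℝ} {φ g : ℝ → ℝ} {g' : ℝ} {x : E} (hx : x ≠ 0)
    (hu : ∀ y, u y = φ ‖y‖) (hφ : ∀ᶠ r in 𝓝 ‖x‖, HasDerivAt φ (g r) r)
    (hg : HasDerivAt g g' ‖x‖) (a b : E) :
    iteratedFDeriv ℝ 2 u x ![a, b] = g ‖x‖ / ‖x‖ * ⟪a, b⟫ +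
      (g' - g ‖x‖ / ‖x‖) / ‖x‖ ^ 2 * (⟪x, a⟫ * ⟪x, b⟫) := by
  have hx' : ‖x‖ ≠ 0 := norm_ne_zero_iff.2 hx
  have hfderiv : fderiv ℝ u =ᶠ[𝓝 x] fun y => (g ‖y‖ / ‖y‖) • innerSL ℝ y := by
    filter_upwards [eventually_ne_nhds hx, continuous_norm.continuousAt.eventually hφ]
      with y hy hφy
    rw [show u = φ ∘ norm from funext hu,
      (hφy.comp_hasFDerivAt y (hasFDerivAt_norm_of_ne_zero hy)).fderiv, smul_smul, div_eq_mul_inv]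
  have hψ : HasDerivAt (fun r => g r / r) ((g' * ‖x‖ - g ‖x‖ * 1) / ‖x‖ ^ 2) ‖x‖ :=
    hg.div (hasDerivAt_id _) hx'
  have hsecond := ((hψ.comp_hasFDerivAt x (hasFDerivAt_norm_of_ne_zero hx)).smul
    (innerSL ℝ : E →L[ℝ] E →L[ℝ] ℝ).hasFDerivAt).congr_of_eventuallyEq hfderiv
  rw [iteratedFDeriv_two_apply, hsecond.fderiv]
  have hinner : ∀ c d : E, (innerSL ℝ : E →L[ℝ] E →L[ℝ] ℝ) c d = ⟪c, d⟫ := fun _ _ => rfl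
  simp only [Function.comp_apply, Matrix.cons_val_zero, Matrix.cons_val_one,
    Matrix.cons_val_fin_one, add_apply, smul_apply, ContinuousLinearMap.smulRight_apply, hinner,
    smul_eq_mul]
  field_simp

end Radial

theorem ConvexOn.apply_zero_le_of_even {E : Type*} [AddCommGroup E] [Module ℝ E] {s : Set E}
    {f : E → ℝ} (hf : ConvexOn ℝ s f) (hs : ∀ x ∈ s, -x ∈ s) (heven : ∀ x ∈ s, f (-x) = f x)
    {x : E} (hx : x ∈ s) : f 0 ≤ f x := by
  have hmid := hf.2 hx (hs x hx) (by norm_num : (0:ℝ) ≤ 1 / 2) (by norm_num : (0:ℝ) ≤ 1 / 2)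
    (by norm_num)
  rw [smul_neg, add_neg_cancel, heven x hx, smul_eq_mul] at hmid
  linarith

theorem deriv_nonneg_of_even_of_convexOn {φ : ℝ → ℝ} {a : ℝ} (ha : 0 < a)
    (hconv : ConvexOn ℝ (Ioo (-a) a) φ) (heven : ∀ r, φ (-r) = φ r)
    (hd : ∀ r ∈ Ioo (-a) a, DifferentiableAt ℝ φ r) :
    deriv φ 0 = 0 ∧ ∀ r ∈ Ico 0 a, 0 ≤ deriv φ r := by
  have h0 : (0:ℝ) ∈ Ioo (-a) a := ⟨neg_lt_zero.2 ha, ha⟩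
  have hmin : IsLocalMin φ 0 :=
    mem_of_superset (Ioo_mem_nhds h0.1 h0.2) fun r hr =>
      hconv.apply_zero_le_of_even (fun y hy => ⟨neg_lt_neg hy.2, neg_lt.1 hy.1⟩)
        (fun y _ => heven y) hr
  refine ⟨hmin.deriv_eq_zero, fun r hr => ?_⟩
  rw [← hmin.deriv_eq_zero]
  exact hconv.monotoneOn_deriv hd h0 ⟨h0.1.trans_le hr.1, hr.2⟩ hr.1

section Euclidean

open Metric
open scoped RealInnerProductSpace

variable {n : ℕ}

lemma norm_smul_single_one (i : Fin n) (r : ℝ) : ‖r • EuclideanSpace.single i (1:ℝ)‖ = |r| := by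
  rw [norm_smul, PiLp.norm_single, norm_one, mul_one, Real.norm_eq_abs]

lemma mapsTo_smul_single_ball (i : Fin n) :
    MapsTo (fun r : ℝ => r • EuclideanSpace.single i (1:ℝ)) (Ioo (-1) 1) (ball 0 1) :=
  fun r hr => by
    rw [mem_ball_zero_iff, norm_smul_single_one]
    exact abs_lt.2 hr

lemma mapsTo_smul_single_closedBall (i : Fin n) :
    MapsTo (fun r : ℝ => r • EuclideanSpace.single i (1:ℝ)) (Icc 0 1) (closedBall 0 1) :=
  fun r hr => by
    rw [mem_closedBall_zero_iff, norm_smul_single_one, abs_of_nonneg hr.1]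
    exact hr.2

lemma ContinuousOn.comp_smul_single {f : EuclideanSpace ℝ (Fin n) → ℝ}
    (hf : ContinuousOn f (closedBall 0 1)) (i : Fin n) :
    ContinuousOn (fun r : ℝ => f (r • EuclideanSpace.single i (1:ℝ))) (Icc 0 1) :=
  hf.comp (continuous_id.smul continuous_const).continuousOn (mapsTo_smul_single_closedBall i)

theorem hessDet_eq_of_iteratedFDeriv {u : EuclideanSpace ℝ (Fin n) → ℝ}
    {x : EuclideanSpace ℝ (Fin n)} (i₀ : Fin n) {p q : ℝ}
    (h : ∀ a b, iteratedFDeriv ℝ 2 u x ![a, b] = p * ⟪a, b⟫ + q * (a i₀ * b i₀)) :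
    hessDet u x = (p + q) * p ^ (n - 1) := by
  have hdiag : (Matrix.of fun i j : Fin n => iteratedFDeriv ℝ 2 u x
      ![EuclideanSpace.single i (1:ℝ), EuclideanSpace.single j (1:ℝ)]) =
      Matrix.diagonal (Function.update (fun _ => p) i₀ (p + q)) := by
    ext i j
    simp only [Matrix.of_apply, h, EuclideanSpace.inner_single_left, PiLp.single_apply,
      Matrix.diagonal_apply, Function.update_apply, map_one, one_mul]
    split_ifs <;> grind
  rw [hessDet, hdiag, Matrix.det_diagonal, Finset.prod_update_of_mem (Finset.mem_univ _),
    Finset.prod_const, Finset.card_univ_sdiff, Finset.card_singleton, Fintype.card_fin]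

theorem hessDet_smul_single_of_radial {u : EuclideanSpace ℝ (Fin n) → ℝ} {φ g : ℝ → ℝ}
    {g' r : ℝ} (i₀ : Fin n) (hr : 0 < r) (hu : ∀ y, u y = φ ‖y‖)
    (hφ : ∀ᶠ s in 𝓝 r, HasDerivAt φ (g s) s) (hg : HasDerivAt g g' r) :
    hessDet u (r • EuclideanSpace.single i₀ 1) = g' * (g r / r) ^ (n - 1) := by
  have hnorm : ‖r • EuclideanSpace.single i₀ (1:ℝ)‖ = r := by
    rw [norm_smul_single_one, abs_of_pos hr]
  have hx : r • EuclideanSpace.single i₀ (1:ℝ) ≠ 0 := by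
    rw [← norm_ne_zero_iff, hnorm]
    exact hr.ne'
  rw [hessDet_eq_of_iteratedFDeriv i₀ (p := g r / r) (q := g' - g r / r) fun a b => ?_]
  · ring
  rw [← hnorm] at hφ hg
  rw [iteratedFDeriv_two_radial hx hu hφ hg, hnorm]
  simp only [real_inner_smul_left, EuclideanSpace.inner_single_left, map_one, one_mul]
  field_simp

theorem MAop_neg_comp_smul_single_of_radial {γ : ℝ} (hγ : 0 ≤ γ) (i₀ : Fin n)
    {u w : EuclideanSpace ℝ (Fin n) → ℝ} (hu : ContDiffOn ℝ 2 u (ball 0 1))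
    (huc : ContinuousOn u (closedBall 0 1)) (hwc : ContinuousOn w (closedBall 0 1))
    (hrad : ∀ x y : EuclideanSpace ℝ (Fin n), ‖x‖ = ‖y‖ → u x = u y)
    (hconv : ConvexOn ℝ (closedBall 0 1) u)
    (hu1 : ∀ x ∈ sphere (0 : EuclideanSpace ℝ (Fin n)) 1, u x = 0)
    (hMA : ∀ x ∈ ball (0 : EuclideanSpace ℝ (Fin n)) 1, hessDet u x = (-w x) ^ γ) :
    EqOn (MAop n γ fun τ => -w (τ • EuclideanSpace.single i₀ 1))
      (fun t => -u (t • EuclideanSpace.single i₀ 1)) (Icc 0 1) := by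
  set e : EuclideanSpace ℝ (Fin n) := EuclideanSpace.single i₀ 1
  set φ : ℝ → ℝ := fun r => u (r • e)
  have hprofile : ∀ y, u y = φ ‖y‖ := fun y =>
    hrad _ _ (by rw [norm_smul_single_one, abs_norm])
  have hφ2 : ContDiffOn ℝ 2 φ (Ioo (-1) 1) :=
    hu.comp (contDiff_id.smul contDiff_const).contDiffOn (mapsTo_smul_single_ball i₀)
  have hφ : ∀ r ∈ Ioo (-1:ℝ) 1, HasDerivAt φ (deriv φ r) r := fun r hr =>
    ((hφ2.contDiffAt (isOpen_Ioo.mem_nhds hr)).differentiableAt (by norm_num)).hasDerivAt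
  have hg : ∀ r ∈ Ioo (-1:ℝ) 1, HasDerivAt (deriv φ) (deriv (deriv φ) r) r := fun r hr =>
    (((hφ2.deriv_of_isOpen isOpen_Ioo (m := 1) (by norm_num)).contDiffAt
      (isOpen_Ioo.mem_nhds hr)).differentiableAt (by norm_num)).hasDerivAt
  have hφconv : ConvexOn ℝ (Ioo (-1) 1) φ :=
    (hconv.comp_linearMap (LinearMap.toSpanSingleton ℝ _ e)).subset
      (fun r hr => ball_subset_closedBall (mapsTo_smul_single_ball i₀ hr)) (convex_Ioo _ _)
  obtain ⟨hg0, hg_nonneg⟩ := deriv_nonneg_of_even_of_convexOn one_pos hφconv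
    (fun r => hrad _ _ (by rw [norm_smul_single_one, norm_smul_single_one, abs_neg]))
    (fun r hr => (hφ r hr).differentiableAt)
  have hode : ∀ r ∈ Ioo (0:ℝ) 1,
      deriv (deriv φ) r * (deriv φ r / r) ^ (n - 1) = (-w (r • e)) ^ γ := fun r hr => by
    have hr' : r ∈ Ioo (-1:ℝ) 1 := ⟨by linarith [hr.1], hr.2⟩
    rw [← hMA _ (mapsTo_smul_single_ball i₀ hr'), hessDet_smul_single_of_radial i₀ hr.1 hprofile
      (eventually_of_mem (isOpen_Ioo.mem_nhds hr') hφ) (hg r hr')]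
  have hφ1 : φ 1 = 0 := hu1 _ (by rw [mem_sphere_zero_iff_norm, norm_smul_single_one, abs_one])
  intro t ht
  rw [MAop_eq_sub_of_ode i₀.pos.ne' hγ (φ := φ) (huc.comp_smul_single i₀)
    (fun r hr => hφ r ⟨by linarith [hr.1], hr.2⟩) (fun r hr => hg r ⟨by linarith [hr.1], hr.2⟩)
    hg0 (fun r hr => hg_nonneg r (Ioo_subset_Ico_self hr)) hode (hwc.comp_smul_single i₀).neg ht]
  show φ 1 - φ t = -φ t
  rw [hφ1, zero_sub]

end Euclidean

theorem stmt6 (N : ℕ) (hN : 2 ≤ N) (α β : ℝ) (hα : 0 < α) (hβ : 0 < β)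
    (hαβ : α * β = (N:ℝ) ^ 2) :
    (¬ ∃ v : ℝ → ℝ, memK v ∧ (∃ t ∈ Icc (0:ℝ) 1, v t ≠ 0) ∧
        ∀ t ∈ Icc (0:ℝ) 1, MAop N α (MAop N β v) t = v t) ∧
    (¬ ∃ u₁ u₂ : EuclideanSpace ℝ (Fin N) → ℝ,
        ContDiffOn ℝ 2 u₁ (Metric.ball 0 1) ∧ ContDiffOn ℝ 2 u₂ (Metric.ball 0 1) ∧
        ContinuousOn u₁ (Metric.closedBall 0 1) ∧ ContinuousOn u₂ (Metric.closedBall 0 1) ∧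
        (∀ x y : EuclideanSpace ℝ (Fin N), ‖x‖ = ‖y‖ → u₁ x = u₁ y ∧ u₂ x = u₂ y) ∧
        ConvexOn ℝ (Metric.closedBall 0 1) u₁ ∧ ConvexOn ℝ (Metric.closedBall 0 1) u₂ ∧
        (∀ x ∈ Metric.ball (0 : EuclideanSpace ℝ (Fin N)) 1, u₁ x < 0 ∧ u₂ x < 0) ∧
        (∀ x ∈ Metric.sphere (0 : EuclideanSpace ℝ (Fin N)) 1, u₁ x = 0 ∧ u₂ x = 0) ∧
        (∀ x ∈ Metric.ball (0 : EuclideanSpace ℝ (Fin N)) 1,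
          hessDet u₁ x = (-u₂ x) ^ α ∧ hessDet u₂ x = (-u₁ x) ^ β)) := by
  have hN0 : N ≠ 0 := by omega
  refine ⟨fun ⟨v, hK, ⟨t, ht, hvt⟩, hfix⟩ =>
    hvt (eqOn_zero_of_MAop_comp_fixed hN0 hα.le hβ.le hαβ hK.1 hK.2.1 hfix ht), ?_⟩
  rintro ⟨u₁, u₂, hu₁, hu₂, hu₁c, hu₂c, hrad, hconv₁, hconv₂, hneg, hzero, hMA⟩
  set i₀ : Fin N := ⟨0, by omega⟩
  have hfix₁ := MAop_neg_comp_smul_single_of_radial hα.le i₀ hu₁ hu₁c hu₂c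
    (fun x y h => (hrad x y h).1) hconv₁ (fun x hx => (hzero x hx).1) (fun x hx => (hMA x hx).1)
  have hfix₂ := MAop_neg_comp_smul_single_of_radial hβ.le i₀ hu₂ hu₂c hu₁c
    (fun x y h => (hrad x y h).2) hconv₂ (fun x hx => (hzero x hx).2) (fun x hx => (hMA x hx).2)
  have hu₁_nonpos : ∀ x ∈ Metric.closedBall (0 : EuclideanSpace ℝ (Fin N)) 1, u₁ x ≤ 0 := by
    intro x hx
    rcases (mem_closedBall_zero_iff.1 hx).lt_or_eq with hx1 | hx1
    · exact (hneg x (mem_ball_zero_iff.2 hx1)).1.le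
    · exact (hzero x (mem_sphere_zero_iff_norm.2 hx1)).1.le
  have hv := eqOn_zero_of_MAop_comp_fixed hN0 hα.le hβ.le hαβ
    (v := fun t => -u₁ (t • EuclideanSpace.single i₀ 1))
    (hu₁c.comp_smul_single i₀).neg
    (fun t ht => neg_nonneg.2 (hu₁_nonpos _ (mapsTo_smul_single_closedBall i₀ ht)))
    (fun t ht => (MAop_congr hfix₂ ht).trans (hfix₁ ht)) (left_mem_Icc.2 zero_le_one)
  simp only [zero_smul, Pi.zero_apply, neg_eq_zero] at hv
  exact (hneg 0 (Metric.mem_ball_self one_pos)).1.ne hv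
end

section
/- Let N ≥ 2 and α, β > 0 with αβ < N². Then the coupled ODE system ((u₁')^N)' = N t^{N-1} (−u₂)^α, ((u₂')^N)' = N t^{N-1} (−u₁)^β on (0,1), with u₁, u₂ < 0 on [0,1), u₁'(0) = u₂'(0) = 0, and u₁(1) = u₂(1) = 0, has at most one solution (u₁, u₂) ∈ C¹[0,1] × C¹[0,1]. -/
/-!
Integrating each equation twice turns a solution into a fixed pair of integral operators:
`-u₁ = T_α (-u₂)` and `-u₂ = T_β (-u₁)`, where
`T_γ w t = ∫ₜ¹ (∫₀ˢ N r^(N-1) w(r)^γ dr)^(1/N) ds` (`radialOp`); the root `u' = (…)^(1/N)` is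
the nonnegative one because `(u')^N > 0` on `(0,1]` while `u` rises from `u 0 < 0` to `u 1 = 0`.
`T_γ` is monotone and homogeneous of degree `γ/N`, so for two fixed pairs `x₂ ≤ c y₂` implies
`x₂ ≤ c^σ y₂` with `σ = αβ/N² < 1`. Both pairs are squeezed between multiples of `1 - t`, which
provides a first `c`, and `c^(σ^n) → 1` gives `x₂ ≤ y₂`; exchanging the pairs gives equality.
-/

open Set

/-- `(u₁, u₂)` is a `C¹` solution of the radial coupled Monge–Ampère ODE system
`((u₁')^N)' = N t^{N-1} f(-u₂)`, `((u₂')^N)' = N t^{N-1} g(-u₁)` on `(0,1)`,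
with `u₁, u₂ < 0` on `[0,1)`, `u₁'(0) = u₂'(0) = 0`, `u₁(1) = u₂(1) = 0`. -/
def IsRadialSol (N : ℕ) (f g : ℝ → ℝ) (u₁ u₂ : ℝ → ℝ) : Prop :=
  (∀ t ∈ Icc (0:ℝ) 1, DifferentiableAt ℝ u₁ t) ∧
  (∀ t ∈ Icc (0:ℝ) 1, DifferentiableAt ℝ u₂ t) ∧
  ContinuousOn (deriv u₁) (Icc (0:ℝ) 1) ∧
  ContinuousOn (deriv u₂) (Icc (0:ℝ) 1) ∧
  (∀ t ∈ Ioo (0:ℝ) 1,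
    HasDerivAt (fun s => (deriv u₁ s) ^ N) ((N:ℝ) * t ^ (N - 1) * f (-u₂ t)) t) ∧
  (∀ t ∈ Ioo (0:ℝ) 1,
    HasDerivAt (fun s => (deriv u₂ s) ^ N) ((N:ℝ) * t ^ (N - 1) * g (-u₁ t)) t) ∧
  (∀ t ∈ Ico (0:ℝ) 1, u₁ t < 0 ∧ u₂ t < 0) ∧
  deriv u₁ 0 = 0 ∧ deriv u₂ 0 = 0 ∧ u₁ 1 = 0 ∧ u₂ 1 = 0

open MeasureTheory Filter Topology

theorem le_of_forall_le_rpow_pow_mul {a b c σ : ℝ} (hc : 0 < c) (hσ₀ : 0 ≤ σ) (hσ₁ : σ < 1)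
    (h : ∀ n : ℕ, a ≤ c ^ σ ^ n * b) : a ≤ b := by
  have hlim : Tendsto (fun n : ℕ => c ^ σ ^ n * b) atTop (𝓝 (c ^ (0:ℝ) * b)) :=
    (((Real.continuousAt_const_rpow hc.ne').tendsto.comp
      (tendsto_pow_atTop_nhds_zero_of_lt_one hσ₀ hσ₁)).mul_const b)
  rw [Real.rpow_zero, one_mul] at hlim
  exact ge_of_tendsto' hlim h

noncomputable def radialMass (N : ℕ) (γ : ℝ) (w : ℝ → ℝ) (s : ℝ) : ℝ :=
  ∫ r in (0:ℝ)..s, N * r ^ (N - 1) * w r ^ γ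

noncomputable def radialOp (N : ℕ) (γ : ℝ) (w : ℝ → ℝ) (t : ℝ) : ℝ :=
  ∫ s in t..1, radialMass N γ w s ^ (N:ℝ)⁻¹

section radialOp

variable {N : ℕ} {γ : ℝ} {w w₁ w₂ : ℝ → ℝ}

theorem continuousOn_radialMass_integrand (hγ : 0 ≤ γ) (hw : ContinuousOn w (Icc 0 1)) :
    ContinuousOn (fun r => (N:ℝ) * r ^ (N - 1) * w r ^ γ) (Icc 0 1) :=
  (continuous_const.mul (continuous_pow _)).continuousOn.mul
    (hw.rpow_const fun _ _ => Or.inr hγ)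

theorem intervalIntegrable_radialMass_integrand (hγ : 0 ≤ γ) (hw : ContinuousOn w (Icc 0 1))
    {a b : ℝ} (ha : a ∈ Icc (0:ℝ) 1) (hb : b ∈ Icc (0:ℝ) 1) :
    IntervalIntegrable (fun r => (N:ℝ) * r ^ (N - 1) * w r ^ γ) volume a b :=
  ((continuousOn_radialMass_integrand hγ hw).mono (uIcc_subset_Icc ha hb)).intervalIntegrable

theorem radialMass_integrand_nonneg (hwn : ∀ r ∈ Icc (0:ℝ) 1, 0 ≤ w r)
    {r : ℝ} (hr : r ∈ Icc (0:ℝ) 1) : 0 ≤ (N:ℝ) * r ^ (N - 1) * w r ^ γ := by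
  have := hwn r hr
  have := hr.1
  positivity

theorem continuousOn_radialMass (hγ : 0 ≤ γ) (hw : ContinuousOn w (Icc 0 1)) :
    ContinuousOn (radialMass N γ w) (Icc 0 1) := by
  have h := intervalIntegral.continuousOn_primitive_interval (a := 0) (b := 1) (μ := volume)
    (f := fun r => (N:ℝ) * r ^ (N - 1) * w r ^ γ)
  rw [uIcc_of_le zero_le_one] at h
  exact h (continuousOn_radialMass_integrand hγ hw).integrableOn_Icc

theorem radialMass_nonneg (hwn : ∀ r ∈ Icc (0:ℝ) 1, 0 ≤ w r) {s : ℝ} (hs : s ∈ Icc (0:ℝ) 1) :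
    0 ≤ radialMass N γ w s :=
  intervalIntegral.integral_nonneg hs.1 fun _ hr =>
    radialMass_integrand_nonneg hwn ⟨hr.1, hr.2.trans hs.2⟩

theorem radialMass_mono (hγ : 0 ≤ γ) (hw : ContinuousOn w (Icc 0 1))
    (hwn : ∀ r ∈ Icc (0:ℝ) 1, 0 ≤ w r) {s s' : ℝ} (hs : 0 ≤ s) (hss' : s ≤ s')
    (hs' : s' ≤ 1) : radialMass N γ w s ≤ radialMass N γ w s' := by
  refine intervalIntegral.integral_mono_interval le_rfl hs hss' ?_
    (intervalIntegrable_radialMass_integrand hγ hw ⟨le_rfl, zero_le_one⟩ ⟨hs.trans hss', hs'⟩)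
  filter_upwards [ae_restrict_mem measurableSet_Ioc] with r hr
  exact radialMass_integrand_nonneg hwn ⟨hr.1.le, hr.2.trans hs'⟩

theorem radialMass_pos (hN : N ≠ 0) (hγ : 0 ≤ γ) (hw : ContinuousOn w (Icc 0 1))
    (hwpos : ∀ r ∈ Ioo (0:ℝ) 1, 0 < w r) {s : ℝ} (hs : s ∈ Ioc (0:ℝ) 1) :
    0 < radialMass N γ w s := by
  refine intervalIntegral.intervalIntegral_pos_of_pos_on
    (intervalIntegrable_radialMass_integrand hγ hw ⟨le_rfl, zero_le_one⟩ ⟨hs.1.le, hs.2⟩)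
    (fun r hr => ?_) hs.1
  have := hwpos r ⟨hr.1, hr.2.trans_le hs.2⟩
  have := hr.1
  have : 0 < N := Nat.pos_of_ne_zero hN
  positivity

theorem radialMass_le_of_le_mul {c : ℝ} (hc : 0 ≤ c) (hγ : 0 ≤ γ)
    (hw₁ : ContinuousOn w₁ (Icc 0 1)) (hw₂ : ContinuousOn w₂ (Icc 0 1))
    (hw₁n : ∀ r ∈ Icc (0:ℝ) 1, 0 ≤ w₁ r) (hw₂n : ∀ r ∈ Icc (0:ℝ) 1, 0 ≤ w₂ r)
    (hle : ∀ r ∈ Icc (0:ℝ) 1, w₁ r ≤ c * w₂ r) {s : ℝ} (hs : s ∈ Icc (0:ℝ) 1) :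
    radialMass N γ w₁ s ≤ c ^ γ * radialMass N γ w₂ s := by
  rw [radialMass, radialMass, ← intervalIntegral.integral_const_mul]
  refine intervalIntegral.integral_mono_on hs.1
    (intervalIntegrable_radialMass_integrand hγ hw₁ ⟨le_rfl, zero_le_one⟩ hs)
    ((intervalIntegrable_radialMass_integrand hγ hw₂ ⟨le_rfl, zero_le_one⟩ hs).const_mul _)
    fun r hr => ?_
  have hr : r ∈ Icc (0:ℝ) 1 := ⟨hr.1, hr.2.trans hs.2⟩
  have hpow : w₁ r ^ γ ≤ c ^ γ * w₂ r ^ γ := by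
    rw [← Real.mul_rpow hc (hw₂n r hr)]
    exact Real.rpow_le_rpow (hw₁n r hr) (hle r hr) hγ
  have : 0 ≤ (N:ℝ) * r ^ (N - 1) := by have := hr.1; positivity
  calc (N:ℝ) * r ^ (N - 1) * w₁ r ^ γ ≤ (N:ℝ) * r ^ (N - 1) * (c ^ γ * w₂ r ^ γ) := by gcongr
    _ = c ^ γ * ((N:ℝ) * r ^ (N - 1) * w₂ r ^ γ) := by ring

theorem continuousOn_radialOp_integrand (hγ : 0 ≤ γ) (hw : ContinuousOn w (Icc 0 1)) :
    ContinuousOn (fun s => radialMass N γ w s ^ (N:ℝ)⁻¹) (Icc 0 1) :=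
  (continuousOn_radialMass hγ hw).rpow_const fun _ _ => Or.inr (by positivity)

theorem intervalIntegrable_radialOp_integrand (hγ : 0 ≤ γ) (hw : ContinuousOn w (Icc 0 1))
    {a b : ℝ} (ha : a ∈ Icc (0:ℝ) 1) (hb : b ∈ Icc (0:ℝ) 1) :
    IntervalIntegrable (fun s => radialMass N γ w s ^ (N:ℝ)⁻¹) volume a b :=
  ((continuousOn_radialOp_integrand hγ hw).mono (uIcc_subset_Icc ha hb)).intervalIntegrable

theorem radialOp_le_of_le_mul {c : ℝ} (hc : 0 ≤ c) (hγ : 0 ≤ γ)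
    (hw₁ : ContinuousOn w₁ (Icc 0 1)) (hw₂ : ContinuousOn w₂ (Icc 0 1))
    (hw₁n : ∀ r ∈ Icc (0:ℝ) 1, 0 ≤ w₁ r) (hw₂n : ∀ r ∈ Icc (0:ℝ) 1, 0 ≤ w₂ r)
    (hle : ∀ r ∈ Icc (0:ℝ) 1, w₁ r ≤ c * w₂ r) {t : ℝ} (ht : t ∈ Icc (0:ℝ) 1) :
    radialOp N γ w₁ t ≤ c ^ (γ / N) * radialOp N γ w₂ t := by
  rw [radialOp, radialOp, ← intervalIntegral.integral_const_mul]
  refine intervalIntegral.integral_mono_on ht.2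
    (intervalIntegrable_radialOp_integrand hγ hw₁ ht ⟨zero_le_one, le_rfl⟩)
    ((intervalIntegrable_radialOp_integrand hγ hw₂ ht ⟨zero_le_one, le_rfl⟩).const_mul _)
    fun s hs => ?_
  have hs : s ∈ Icc (0:ℝ) 1 := ⟨ht.1.trans hs.1, hs.2⟩
  calc radialMass N γ w₁ s ^ (N:ℝ)⁻¹ ≤ (c ^ γ * radialMass N γ w₂ s) ^ (N:ℝ)⁻¹ :=
        Real.rpow_le_rpow (radialMass_nonneg hw₁n hs)
          (radialMass_le_of_le_mul hc hγ hw₁ hw₂ hw₁n hw₂n hle hs) (by positivity)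
    _ = c ^ (γ / N) * radialMass N γ w₂ s ^ (N:ℝ)⁻¹ := by
        rw [Real.mul_rpow (Real.rpow_nonneg hc γ) (radialMass_nonneg hw₂n hs),
          ← Real.rpow_mul hc, div_eq_mul_inv]

theorem radialOp_le_mul_one_sub (hγ : 0 ≤ γ) (hw : ContinuousOn w (Icc 0 1))
    (hwn : ∀ r ∈ Icc (0:ℝ) 1, 0 ≤ w r) {t : ℝ} (ht : t ∈ Icc (0:ℝ) 1) :
    radialOp N γ w t ≤ radialMass N γ w 1 ^ (N:ℝ)⁻¹ * (1 - t) := by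
  have h := intervalIntegral.integral_mono_on ht.2
    (intervalIntegrable_radialOp_integrand (N := N) hγ hw ht ⟨zero_le_one, le_rfl⟩)
    intervalIntegrable_const fun s hs =>
      Real.rpow_le_rpow (radialMass_nonneg hwn ⟨ht.1.trans hs.1, hs.2⟩)
        (radialMass_mono hγ hw hwn (ht.1.trans hs.1) hs.2 le_rfl) (by positivity)
  rwa [intervalIntegral.integral_const, smul_eq_mul, mul_comm] at h

theorem exists_pos_mul_one_sub_le_radialOp (hN : N ≠ 0) (hγ : 0 ≤ γ)
    (hw : ContinuousOn w (Icc 0 1)) (hwn : ∀ r ∈ Icc (0:ℝ) 1, 0 ≤ w r)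
    (hwpos : ∀ r ∈ Ioo (0:ℝ) 1, 0 < w r) :
    ∃ m > 0, ∀ t ∈ Icc (0:ℝ) 1, m * (1 - t) ≤ radialOp N γ w t := by
  set m := radialMass N γ w (1 / 2) ^ (N:ℝ)⁻¹
  have hm : 0 < m := Real.rpow_pos_of_pos (radialMass_pos hN hγ hw hwpos (by norm_num)) _
  refine ⟨m / 2, by positivity, fun t ht => ?_⟩
  set a := max t (1 / 2)
  have ha : a ∈ Icc (0:ℝ) 1 := ⟨ht.1.trans (le_max_left _ _), max_le ht.2 (by norm_num)⟩
  have hbound : m * (1 - a) ≤ ∫ s in a..1, radialMass N γ w s ^ (N:ℝ)⁻¹ := by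
    have h := intervalIntegral.integral_mono_on ha.2 intervalIntegrable_const
      (intervalIntegrable_radialOp_integrand hγ hw ha ⟨zero_le_one, le_rfl⟩) fun s hs =>
        Real.rpow_le_rpow (radialMass_nonneg hwn (by norm_num))
          (radialMass_mono hγ hw hwn (by norm_num) ((le_max_right _ _).trans hs.1) hs.2)
          (by positivity)
    rwa [intervalIntegral.integral_const, smul_eq_mul, mul_comm] at h
  have hmono : (∫ s in a..1, radialMass N γ w s ^ (N:ℝ)⁻¹) ≤ radialOp N γ w t := by
    refine intervalIntegral.integral_mono_interval (le_max_left _ _) ha.2 le_rfl ?_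
      (intervalIntegrable_radialOp_integrand hγ hw ht ⟨zero_le_one, le_rfl⟩)
    filter_upwards [ae_restrict_mem measurableSet_Ioc] with s hs
    exact Real.rpow_nonneg (radialMass_nonneg hwn ⟨ht.1.trans hs.1.le, hs.2⟩) _
  have hhalf : (1 - t) / 2 ≤ 1 - a := by
    rcases max_cases t (1 / 2) with h | h <;> linarith [h.1, ht.1, ht.2]
  calc m / 2 * (1 - t) = m * ((1 - t) / 2) := by ring
    _ ≤ m * (1 - a) := by gcongr
    _ ≤ _ := hbound
    _ ≤ _ := hmono

end radialOp

theorem pos_deriv_of_deriv_ne_zero {u : ℝ → ℝ} {a b : ℝ} (hab : a < b)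
    (hud : ∀ t ∈ Icc a b, DifferentiableAt ℝ u t) (hudc : ContinuousOn (deriv u) (Icc a b))
    (hne : ∀ t ∈ Ioc a b, deriv u t ≠ 0) (hlt : u a < u b) :
    ∀ t ∈ Ioc a b, 0 < deriv u t := by
  obtain ⟨ξ, hξ, hslope⟩ := exists_deriv_eq_slope u hab
    (fun t ht => (hud t ht).continuousAt.continuousWithinAt)
    (fun t ht => (hud t (Ioo_subset_Icc_self ht)).differentiableWithinAt)
  have hξpos : 0 < deriv u ξ := by rw [hslope]; exact div_pos (by linarith) (by linarith)
  intro t ht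
  by_contra! hneg
  obtain ⟨c, hc, hc0⟩ := isPreconnected_Ioc.intermediate_value ht ⟨hξ.1, hξ.2.le⟩
    (hudc.mono Ioc_subset_Icc_self) ⟨hneg, hξpos.le⟩
  exact hne c hc hc0

section radialRepresentation

variable {N : ℕ} {γ : ℝ} {u w : ℝ → ℝ}

theorem pow_deriv_eq_radialMass (hN : N ≠ 0) (hγ : 0 ≤ γ)
    (hudc : ContinuousOn (deriv u) (Icc 0 1)) (hw : ContinuousOn w (Icc 0 1))
    (hode : ∀ t ∈ Ioo (0:ℝ) 1,
      HasDerivAt (fun s => deriv u s ^ N) ((N:ℝ) * t ^ (N - 1) * w t ^ γ) t)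
    (hd0 : deriv u 0 = 0) {t : ℝ} (ht : t ∈ Icc (0:ℝ) 1) :
    deriv u t ^ N = radialMass N γ w t := by
  have h := intervalIntegral.integral_eq_sub_of_hasDeriv_right_of_le ht.1
    ((hudc.mono (Icc_subset_Icc le_rfl ht.2)).pow N)
    (fun s hs => (hode s ⟨hs.1, hs.2.trans_le ht.2⟩).hasDerivWithinAt)
    (intervalIntegrable_radialMass_integrand hγ hw ⟨le_rfl, zero_le_one⟩ ht)
  rw [radialMass, h]
  simp only [Pi.pow_apply, hd0, zero_pow hN, sub_zero]

theorem deriv_eq_radialMass_rpow (hN : N ≠ 0) (hγ : 0 ≤ γ)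
    (hud : ∀ t ∈ Icc (0:ℝ) 1, DifferentiableAt ℝ u t)
    (hudc : ContinuousOn (deriv u) (Icc 0 1)) (hw : ContinuousOn w (Icc 0 1))
    (hwpos : ∀ t ∈ Ioo (0:ℝ) 1, 0 < w t)
    (hode : ∀ t ∈ Ioo (0:ℝ) 1,
      HasDerivAt (fun s => deriv u s ^ N) ((N:ℝ) * t ^ (N - 1) * w t ^ γ) t)
    (hd0 : deriv u 0 = 0) (hu : u 0 < u 1) {t : ℝ} (ht : t ∈ Icc (0:ℝ) 1) :
    deriv u t = radialMass N γ w t ^ (N:ℝ)⁻¹ := by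
  have hpow : ∀ s ∈ Icc (0:ℝ) 1, deriv u s ^ N = radialMass N γ w s := fun s hs =>
    pow_deriv_eq_radialMass hN hγ hudc hw hode hd0 hs
  have hpos : ∀ s ∈ Ioc (0:ℝ) 1, 0 < deriv u s := by
    refine pos_deriv_of_deriv_ne_zero zero_lt_one hud hudc (fun s hs h0 => ?_) hu
    have hmass := hpow s (Ioc_subset_Icc_self hs)
    rw [h0, zero_pow hN] at hmass
    exact (radialMass_pos hN hγ hw hwpos hs).ne hmass
  have hnonneg : 0 ≤ deriv u t := by
    rcases ht.1.eq_or_lt with h0 | h0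
    · rw [← h0, hd0]
    · exact (hpos t ⟨h0, ht.2⟩).le
  rw [← hpow t ht, Real.pow_rpow_inv_natCast hnonneg hN]

theorem neg_eq_radialOp (hN : N ≠ 0) (hγ : 0 ≤ γ)
    (hud : ∀ t ∈ Icc (0:ℝ) 1, DifferentiableAt ℝ u t)
    (hudc : ContinuousOn (deriv u) (Icc 0 1)) (hw : ContinuousOn w (Icc 0 1))
    (hwpos : ∀ t ∈ Ioo (0:ℝ) 1, 0 < w t)
    (hode : ∀ t ∈ Ioo (0:ℝ) 1,
      HasDerivAt (fun s => deriv u s ^ N) ((N:ℝ) * t ^ (N - 1) * w t ^ γ) t)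
    (hd0 : deriv u 0 = 0) (hu0 : u 0 < 0) (hu1 : u 1 = 0) {t : ℝ} (ht : t ∈ Icc (0:ℝ) 1) :
    -u t = radialOp N γ w t := by
  have hsub : uIcc t 1 ⊆ Icc 0 1 := uIcc_subset_Icc ht ⟨zero_le_one, le_rfl⟩
  have h := intervalIntegral.integral_deriv_eq_sub (fun s hs => hud s (hsub hs))
    ((hudc.mono hsub).intervalIntegrable)
  rw [hu1, zero_sub] at h
  rw [← h, radialOp]
  refine intervalIntegral.integral_congr fun s hs => ?_
  exact deriv_eq_radialMass_rpow hN hγ hud hudc hw hwpos hode hd0 (hu1 ▸ hu0) (hsub hs)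

end radialRepresentation

structure IsRadialFixedPair (N : ℕ) (α β : ℝ) (x₁ x₂ : ℝ → ℝ) : Prop where
  continuousOn_fst : ContinuousOn x₁ (Icc 0 1)
  continuousOn_snd : ContinuousOn x₂ (Icc 0 1)
  nonneg_fst : ∀ t ∈ Icc (0:ℝ) 1, 0 ≤ x₁ t
  nonneg_snd : ∀ t ∈ Icc (0:ℝ) 1, 0 ≤ x₂ t
  pos_fst : ∀ t ∈ Ioo (0:ℝ) 1, 0 < x₁ t
  fst_eq : ∀ t ∈ Icc (0:ℝ) 1, x₁ t = radialOp N α x₂ t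
  snd_eq : ∀ t ∈ Icc (0:ℝ) 1, x₂ t = radialOp N β x₁ t

theorem IsRadialSol.isRadialFixedPair {N : ℕ} (hN : N ≠ 0) {α β : ℝ} (hα : 0 ≤ α) (hβ : 0 ≤ β)
    {u₁ u₂ : ℝ → ℝ} (hu : IsRadialSol N (fun x => x ^ α) (fun x => x ^ β) u₁ u₂) :
    IsRadialFixedPair N α β (fun t => -u₁ t) (fun t => -u₂ t) := by
  obtain ⟨hu₁d, hu₂d, hu₁dc, hu₂dc, hode₁, hode₂, hneg, hd₁, hd₂, hu₁1, hu₂1⟩ := hu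
  have hcont : ∀ {u : ℝ → ℝ}, (∀ t ∈ Icc (0:ℝ) 1, DifferentiableAt ℝ u t) →
      ContinuousOn (fun t => -u t) (Icc 0 1) := fun hud =>
    ContinuousOn.neg fun t ht => (hud t ht).continuousAt.continuousWithinAt
  have hnonneg : ∀ {u : ℝ → ℝ}, (∀ t ∈ Ico (0:ℝ) 1, u t < 0) → u 1 = 0 →
      ∀ t ∈ Icc (0:ℝ) 1, 0 ≤ -u t := fun hneg h1 t ht => by
    rcases ht.2.eq_or_lt with rfl | h
    · rw [h1, neg_zero]
    · exact (neg_pos.2 (hneg t ⟨ht.1, h⟩)).le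
  have hpos₁ : ∀ t ∈ Ioo (0:ℝ) 1, 0 < -u₁ t := fun t ht =>
    neg_pos.2 (hneg t (Ioo_subset_Ico_self ht)).1
  have hpos₂ : ∀ t ∈ Ioo (0:ℝ) 1, 0 < -u₂ t := fun t ht =>
    neg_pos.2 (hneg t (Ioo_subset_Ico_self ht)).2
  have hneg0 := hneg 0 ⟨le_rfl, zero_lt_one⟩
  exact
    { continuousOn_fst := hcont hu₁d
      continuousOn_snd := hcont hu₂d
      nonneg_fst := hnonneg (fun t ht => (hneg t ht).1) hu₁1
      nonneg_snd := hnonneg (fun t ht => (hneg t ht).2) hu₂1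
      pos_fst := hpos₁
      fst_eq := fun t ht =>
        neg_eq_radialOp hN hα hu₁d hu₁dc (hcont hu₂d) hpos₂ hode₁ hd₁ hneg0.1 hu₁1 ht
      snd_eq := fun t ht =>
        neg_eq_radialOp hN hβ hu₂d hu₂dc (hcont hu₁d) hpos₁ hode₂ hd₂ hneg0.2 hu₂1 ht }

namespace IsRadialFixedPair

variable {N : ℕ} {α β : ℝ} {x₁ x₂ y₁ y₂ : ℝ → ℝ}

theorem fst_le_of_snd_le (hα : 0 ≤ α) (hx : IsRadialFixedPair N α β x₁ x₂)
    (hy : IsRadialFixedPair N α β y₁ y₂) {c : ℝ} (hc : 0 ≤ c)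
    (hle : ∀ t ∈ Icc (0:ℝ) 1, x₂ t ≤ c * y₂ t) :
    ∀ t ∈ Icc (0:ℝ) 1, x₁ t ≤ c ^ (α / N) * y₁ t := fun t ht => by
  rw [hx.fst_eq t ht, hy.fst_eq t ht]
  exact radialOp_le_of_le_mul hc hα hx.continuousOn_snd hy.continuousOn_snd hx.nonneg_snd
    hy.nonneg_snd hle ht

theorem snd_le_of_fst_le (hβ : 0 ≤ β) (hx : IsRadialFixedPair N α β x₁ x₂)
    (hy : IsRadialFixedPair N α β y₁ y₂) {c : ℝ} (hc : 0 ≤ c)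
    (hle : ∀ t ∈ Icc (0:ℝ) 1, x₁ t ≤ c * y₁ t) :
    ∀ t ∈ Icc (0:ℝ) 1, x₂ t ≤ c ^ (β / N) * y₂ t := fun t ht => by
  rw [hx.snd_eq t ht, hy.snd_eq t ht]
  exact radialOp_le_of_le_mul hc hβ hx.continuousOn_fst hy.continuousOn_fst hx.nonneg_fst
    hy.nonneg_fst hle ht

theorem exists_snd_le_mul (hN : N ≠ 0) (hβ : 0 ≤ β) (hx : IsRadialFixedPair N α β x₁ x₂)
    (hy : IsRadialFixedPair N α β y₁ y₂) :
    ∃ c > 0, ∀ t ∈ Icc (0:ℝ) 1, x₂ t ≤ c * y₂ t := by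
  obtain ⟨m, hm, hmy⟩ := exists_pos_mul_one_sub_le_radialOp hN hβ hy.continuousOn_fst
    hy.nonneg_fst hy.pos_fst
  set K := radialMass N β x₁ 1 ^ (N:ℝ)⁻¹
  have hK : 0 ≤ K := Real.rpow_nonneg (radialMass_nonneg hx.nonneg_fst ⟨zero_le_one, le_rfl⟩) _
  refine ⟨K / m + 1, by positivity, fun t ht => ?_⟩
  have hxK : x₂ t ≤ K * (1 - t) := by
    rw [hx.snd_eq t ht]
    exact radialOp_le_mul_one_sub hβ hx.continuousOn_fst hx.nonneg_fst ht
  have hym : m * (1 - t) ≤ y₂ t := by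
    rw [hy.snd_eq t ht]
    exact hmy t ht
  calc x₂ t ≤ K / m * (m * (1 - t)) := by rwa [← mul_assoc, div_mul_cancel₀ _ hm.ne']
    _ ≤ K / m * y₂ t := by gcongr
    _ ≤ (K / m + 1) * y₂ t := mul_le_mul_of_nonneg_right (by linarith) (hy.nonneg_snd t ht)

theorem fst_le_and_snd_le (hN : N ≠ 0) (hα : 0 ≤ α) (hβ : 0 ≤ β) (hαβ : α * β < (N:ℝ) ^ 2)
    (hx : IsRadialFixedPair N α β x₁ x₂) (hy : IsRadialFixedPair N α β y₁ y₂) :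
    ∀ t ∈ Icc (0:ℝ) 1, x₁ t ≤ y₁ t ∧ x₂ t ≤ y₂ t := by
  have hσ₁ : α / N * (β / N) < 1 := by
    rw [div_mul_div_comm, div_lt_one (by positivity), ← sq]
    exact hαβ
  set σ := α / N * (β / N)
  have hstep : ∀ c ≥ 0, (∀ t ∈ Icc (0:ℝ) 1, x₂ t ≤ c * y₂ t) →
      ∀ t ∈ Icc (0:ℝ) 1, x₂ t ≤ c ^ σ * y₂ t := fun c hc hle => by
    rw [Real.rpow_mul hc]
    exact hx.snd_le_of_fst_le hβ hy (Real.rpow_nonneg hc _)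
      (hx.fst_le_of_snd_le hα hy hc hle)
  obtain ⟨c, hc, hle⟩ := hx.exists_snd_le_mul hN hβ hy
  have hiter : ∀ n : ℕ, ∀ t ∈ Icc (0:ℝ) 1, x₂ t ≤ c ^ σ ^ n * y₂ t := by
    intro n
    induction n with
    | zero => simpa using hle
    | succ n ih =>
      rw [pow_succ, Real.rpow_mul hc.le]
      exact hstep _ (Real.rpow_nonneg hc.le _) ih
  have h₂ : ∀ t ∈ Icc (0:ℝ) 1, x₂ t ≤ y₂ t := fun t ht =>
    le_of_forall_le_rpow_pow_mul hc (by positivity) hσ₁ fun n => hiter n t ht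
  have h₁ := hx.fst_le_of_snd_le hα hy zero_le_one (by simpa using h₂)
  exact fun t ht => ⟨by simpa using h₁ t ht, h₂ t ht⟩

end IsRadialFixedPair

theorem stmt10 (N : ℕ) (hN : 2 ≤ N) (α β : ℝ) (hα : 0 < α) (hβ : 0 < β)
    (hαβ : α * β < (N:ℝ) ^ 2)
    (u₁ u₂ v₁ v₂ : ℝ → ℝ)
    (hu : IsRadialSol N (fun x => x ^ α) (fun x => x ^ β) u₁ u₂)
    (hv : IsRadialSol N (fun x => x ^ α) (fun x => x ^ β) v₁ v₂) :
    ∀ t ∈ Icc (0:ℝ) 1, u₁ t = v₁ t ∧ u₂ t = v₂ t := by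
  have hN₀ : N ≠ 0 := by omega
  have hu' := hu.isRadialFixedPair hN₀ hα.le hβ.le
  have hv' := hv.isRadialFixedPair hN₀ hα.le hβ.le
  intro t ht
  obtain ⟨huv₁, huv₂⟩ := hu'.fst_le_and_snd_le hN₀ hα.le hβ.le hαβ hv' t ht
  obtain ⟨hvu₁, hvu₂⟩ := hv'.fst_le_and_snd_le hN₀ hα.le hβ.le hαβ hu' t ht
  exact ⟨by linarith, by linarith⟩
end

section
/- Let E be a real Banach space, P ⊂ E a cone, u₀ ∈ P positive, and A : P → P an increasing operator (with respect to the order induced by P) that is u₀-sublinear, i.e. (a) for every x > 0 there exist θ₁, θ₂ > 0 with θ₁u₀ ≤ Ax ≤ θ₂u₀, and (b) for every x with θ₁u₀ ≤ x ≤ θ₂u₀ and every t ∈ (0,1) there exists η = η(x,t) > 0 with A(tx) ≥ (1+η)t Ax. Then A has at most one positive fixed point in P. -/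
theorem stmt11 {E : Type*} [NormedAddCommGroup E] [NormedSpace ℝ E] [CompleteSpace E]
    (P : Set E) (hPclosed : IsClosed P)
    (hPadd : ∀ x ∈ P, ∀ y ∈ P, x + y ∈ P)
    (hPsmul : ∀ t : ℝ, 0 ≤ t → ∀ x ∈ P, t • x ∈ P)
    (hPsalient : ∀ x, x ∈ P → -x ∈ P → x = 0)
    (u₀ : E) (hu₀ : u₀ ∈ P) (hu₀ne : u₀ ≠ 0)
    (A : E → E) (hAP : ∀ x ∈ P, A x ∈ P)
    -- `A` is increasing with respect to the order induced by `P`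
    (hAmono : ∀ x ∈ P, ∀ y ∈ P, y - x ∈ P → A y - A x ∈ P)
    -- (a): for every `x > 0` there are `θ₁, θ₂ > 0` with `θ₁ u₀ ≤ A x ≤ θ₂ u₀`
    (ha : ∀ x ∈ P, x ≠ 0 → ∃ θ₁ > (0:ℝ), ∃ θ₂ > (0:ℝ),
      A x - θ₁ • u₀ ∈ P ∧ θ₂ • u₀ - A x ∈ P)
    -- (b): for every `x` comparable to `u₀` and `t ∈ (0,1)` there is `η > 0` with
    -- `A (t x) ≥ (1+η) t A x`
    (hb : ∀ x ∈ P, (∃ θ₁ > (0:ℝ), ∃ θ₂ > (0:ℝ),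
        x - θ₁ • u₀ ∈ P ∧ θ₂ • u₀ - x ∈ P) →
      ∀ t ∈ Set.Ioo (0:ℝ) 1, ∃ η > (0:ℝ),
        A (t • x) - ((1 + η) * t) • A x ∈ P) :
    ∀ x ∈ P, x ≠ 0 → ∀ y ∈ P, y ≠ 0 → A x = x → A y = y → x = y := by
  have key : ∀ x ∈ P, x ≠ 0 → ∀ y ∈ P, y ≠ 0 → A x = x → A y = y → x - y ∈ P := by
    intro x hx hxne y hy hyne hfx hfy
    obtain ⟨a₁, ha₁, a₂, ha₂, hxl, hxu⟩ := ha x hx hxne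
    rw [hfx] at hxl hxu
    obtain ⟨b₁, hb₁, b₂, hb₂, hyl, hyu⟩ := ha y hy hyne
    rw [hfy] at hyl hyu
    set S : Set ℝ := {t | 0 ≤ t ∧ x - t • y ∈ P} with hS
    have hne : S.Nonempty := ⟨0, le_refl 0, by simpa using hx⟩
    have hbdd : BddAbove S := by
      refine ⟨a₂ / b₁, fun t ht => ?_⟩
      by_contra hlt
      push_neg at hlt
      have htb : a₂ < t * b₁ := by
        rw [div_lt_iff₀ hb₁] at hlt; linarith [hlt]
      have h1 : t • (y - b₁ • u₀) ∈ P := hPsmul t ht.1 _ hyl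
      have h2 : (a₂ • u₀ - x) + (x - t • y) ∈ P := hPadd _ hxu _ ht.2
      have h3 : ((a₂ • u₀ - x) + (x - t • y)) + t • (y - b₁ • u₀) ∈ P :=
        hPadd _ h2 _ h1
      have h4 : (a₂ - t * b₁) • u₀ ∈ P := by
        convert h3 using 1; module
      have h5 : (t * b₁ - a₂) • u₀ ∈ P := hPsmul _ (by linarith) _ hu₀
      have h6 : (t * b₁ - a₂) • u₀ = 0 := by
        apply hPsalient _ h5
        convert h4 using 1; module
      rcases smul_eq_zero.mp h6 with h | h
      · linarith
      · exact hu₀ne h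
    have hSclosed : IsClosed S := by
      have : S = {t : ℝ | 0 ≤ t} ∩ ((fun t : ℝ => x - t • y) ⁻¹' P) := rfl
      rw [this]
      exact (isClosed_Ici (a := (0:ℝ))).inter
        (hPclosed.preimage (continuous_const.sub (continuous_id.smul continuous_const)))
    set T : ℝ := sSup S with hT
    have hTS : T ∈ S := hSclosed.csSup_mem hne hbdd
    have hmem : a₁ / b₂ ∈ S := by
      constructor
      · positivity
      · have h1 : (a₁ / b₂) • (b₂ • u₀ - y) ∈ P := hPsmul _ (by positivity) _ hyu
        have h2 : (x - a₁ • u₀) + (a₁ / b₂) • (b₂ • u₀ - y) ∈ P := hPadd _ hxl _ h1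
        convert h2 using 1
        rw [smul_sub, smul_smul, div_mul_cancel₀ a₁ hb₂.ne']
        module
      
    have hTpos : 0 < T := lt_of_lt_of_le (by positivity) (le_csSup hbdd hmem)
    have hT1 : 1 ≤ T := by
      by_contra hlt
      push_neg at hlt
      obtain ⟨η, hη, hAt⟩ := hb y hy ⟨b₁, hb₁, b₂, hb₂, hyl, hyu⟩ T ⟨hTpos, hlt⟩
      rw [hfy] at hAt
      have hTy : T • y ∈ P := hPsmul _ hTpos.le _ hy
      have hmono : A x - A (T • y) ∈ P := hAmono _ hTy _ hx hTS.2
      rw [hfx] at hmono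
      have hsum : (x - A (T • y)) + (A (T • y) - ((1 + η) * T) • y) ∈ P :=
        hPadd _ hmono _ hAt
      have hnew : ((1 + η) * T) ∈ S := by
        constructor
        · positivity
        · convert hsum using 1; module
      have : (1 + η) * T ≤ T := le_csSup hbdd hnew
      nlinarith
    have h1 : (T - 1) • y ∈ P := hPsmul _ (by linarith) _ hy
    have h2 : (x - T • y) + (T - 1) • y ∈ P := hPadd _ hTS.2 _ h1
    convert h2 using 1; module
  intro x hx hxne y hy hyne hfx hfy
  have h1 := key x hx hxne y hy hyne hfx hfy
  have h2 := key y hy hyne x hx hxne hfy hfx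
  have := hPsalient _ h1 (by convert h2 using 1; module)
  have : x = y := by
    have := sub_eq_zero.mp this; exact this
  exact this
end

section
/- Let E be a real Banach space containing a cone M, and let A : E → E be a completely continuous operator whose restriction to M is positively homogeneous of degree 1, monotone (with respect to the order induced by M), and strong (for all u, v ∈ Im(A) ∩ M ∖ {0} there exist ρ, τ > 0 with u − ρv ∈ M and v − τu ∈ M). Assume there exists w ∈ M with w ≠ 0, A(w) ≠ 0, and w, A(w) ∈ Im(A) ∩ M. Then there exists λ₀ > 0 such that: (1) there exists u ∈ M ∖ {0} with u = λ₀ A(u); (2) if v ∈ M ∖ {0} and λ > 0 satisfy v = λA(v), then λ = λ₀. -/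
open Filter Topology Bornology Metric Set

private def iterSeq {E : Type*} [AddCommGroup E] [Module ℝ E] (A : E → E) (s : ℝ) (w : E) :
    ℕ → E
  | 0 => w
  | k + 1 => s • A (iterSeq A s w k) + w

private lemma bdd_scal {E : Type*} [NormedAddCommGroup E] [NormedSpace ℝ E]
    (M : Set E) (hMclosed : IsClosed M)
    (hMsmul : ∀ t : ℝ, 0 ≤ t → ∀ x ∈ M, t • x ∈ M)
    (hMsalient : ∀ x, x ∈ M → -x ∈ M → x = 0)
    (p z : E) (hzM : z ∈ M) (hzne : z ≠ 0) :
    BddAbove {c : ℝ | p - c • z ∈ M} := by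
  by_contra hb
  rw [not_bddAbove_iff] at hb
  choose c hc hlt using fun n : ℕ => hb (n : ℝ)
  have hcpos : ∀ n, 0 < c n := fun n => lt_of_le_of_lt (Nat.cast_nonneg n) (hlt n)
  have hmem : ∀ n, (c n)⁻¹ • p - z ∈ M := by
    intro n
    have h := hMsmul (c n)⁻¹ (inv_nonneg.mpr (hcpos n).le) _ (hc n)
    rwa [smul_sub, smul_smul, inv_mul_cancel₀ (ne_of_gt (hcpos n)), one_smul] at h
  have hct : Tendsto c atTop atTop :=
    tendsto_atTop_mono (fun n => (hlt n).le) tendsto_natCast_atTop_atTop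
  have h1 : Tendsto (fun n : ℕ => (c n)⁻¹) atTop (𝓝 0) := tendsto_inv_atTop_zero.comp hct
  have hio : Tendsto (fun n : ℕ => (c n)⁻¹ • p - z) atTop (𝓝 (-z)) := by
    have := (h1.smul_const p).sub_const z
    simpa using this
  exact hzne (hMsalient z hzM (hMclosed.mem_of_tendsto hio (Eventually.of_forall hmem)))

private lemma exists_sol {E : Type*} [NormedAddCommGroup E] [NormedSpace ℝ E]
    (M : Set E) (hMclosed : IsClosed M)
    (hMadd : ∀ x ∈ M, ∀ y ∈ M, x + y ∈ M)
    (hMsmul : ∀ t : ℝ, 0 ≤ t → ∀ x ∈ M, t • x ∈ M)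
    (hMsalient : ∀ x, x ∈ M → -x ∈ M → x = 0)
    (A : E → E) (hAcont : Continuous A)
    (hAcompact : ∀ s : Set E, Bornology.IsBounded s → IsCompact (closure (A '' s)))
    (hAM : ∀ x ∈ M, A x ∈ M)
    (hAhom : ∀ t : ℝ, 0 ≤ t → ∀ x ∈ M, A (t • x) = t • A x)
    (hAmono : ∀ x y : E, y - x ∈ M → A y - A x ∈ M)
    (w : E) (hwM : w ∈ M)
    (s : ℝ) (hs : 0 ≤ s) (q : E) (hq1 : q - w ∈ M) (hq2 : q - (s • A q + w) ∈ M) :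
    ∃ p, p ∈ M ∧ p - w ∈ M ∧ p = s • A p + w := by
  classical
  set x : ℕ → E := iterSeq A s w with hxdef
  have hx0 : x 0 = w := rfl
  have hxstep : ∀ k, x (k + 1) = s • A (x k) + w := fun k => rfl
  -- membership in M
  have hxM : ∀ k, x k ∈ M := by
    intro k
    induction k with
    | zero => exact hwM
    | succ k ih => exact hMadd _ (hMsmul s hs _ (hAM _ ih)) _ hwM
  -- increasing
  have hmono : ∀ k, x (k + 1) - x k ∈ M := by
    intro k
    induction k with
    | zero =>
      have : x 1 - x 0 = s • A w := by
        rw [hxstep 0, hx0]; abel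
      rw [this]; exact hMsmul s hs _ (hAM _ hwM)
    | succ k ih =>
      have hA := hAmono _ _ ih
      have : x (k + 2) - x (k + 1) = s • (A (x (k + 1)) - A (x k)) := by
        rw [hxstep (k + 1), hxstep k]; module
      rw [this]; exact hMsmul s hs _ hA
  have h0M : (0 : E) ∈ M := by simpa using hMsmul 0 le_rfl w hwM
  have hchain : ∀ k l, k ≤ l → x l - x k ∈ M := by
    intro k l hkl
    induction l, hkl using Nat.le_induction with
    | base => simpa using h0M
    | succ l hkl ih =>
      have := hMadd _ (hmono l) _ ih
      simpa using this
  -- ceiling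
  have hceil : ∀ k, q - x k ∈ M := by
    intro k
    induction k with
    | zero => rw [hx0]; exact hq1
    | succ k ih =>
      have hA := hMsmul s hs _ (hAmono _ _ ih)
      have := hMadd _ hq2 _ hA
      have heq : q - (s • A q + w) + s • (A q - A (x k)) = q - x (k + 1) := by
        rw [hxstep k]; module
      rwa [heq] at this
  -- boundedness via record indices
  have hbdd : ∃ R : ℝ, ∀ k, ‖x k‖ ≤ R := by
    by_contra hunb
    push_neg at hunb
    have exmain : ∀ m : ℕ, ∃ k, ‖x 0‖ + m + 1 < ‖x k‖ := fun m => hunb _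
    set k : ℕ → ℕ := fun m => Nat.find (exmain m) with hkdef
    have hk1 : ∀ m, ‖x 0‖ + m + 1 < ‖x (k m)‖ := fun m => Nat.find_spec (exmain m)
    have hkmin : ∀ m, ∀ i < k m, ‖x i‖ ≤ ‖x 0‖ + m + 1 := fun m i hi =>
      not_lt.1 (Nat.find_min (exmain m) hi)
    have hk0 : ∀ m, k m ≠ 0 := by
      intro m h
      have := hk1 m
      rw [h] at this
      have : (m : ℝ) + 1 < 0 := by linarith
      have h2 : (0 : ℝ) ≤ (m : ℝ) := Nat.cast_nonneg m
      linarith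
    set n : ℕ → ℝ := fun m => ‖x (k m)‖ with hndef
    have hnpos : ∀ m, 0 < n m := by
      intro m
      have := hk1 m
      have h2 : (0 : ℝ) ≤ ‖x 0‖ + m + 1 := by positivity
      linarith
    have hprevle : ∀ m, ‖x (k m - 1)‖ ≤ ‖x 0‖ + m + 1 := fun m =>
      hkmin m _ (Nat.pred_lt (hk0 m))
    set z : ℕ → E := fun m => (n m)⁻¹ • x (k m - 1) with hzdef
    have hzM : ∀ m, z m ∈ M := fun m => hMsmul _ (inv_nonneg.mpr (hnpos m).le) _ (hxM _)
    have hz1 : ∀ m, ‖z m‖ ≤ 1 := by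
      intro m
      have h1 : ‖x (k m - 1)‖ ≤ n m := le_of_lt (lt_of_le_of_lt (hprevle m) (hk1 m))
      have heq : ‖z m‖ = ‖x (k m - 1)‖ / n m := by
        show ‖(n m)⁻¹ • x (k m - 1)‖ = _
        rw [norm_smul, Real.norm_eq_abs, abs_of_nonneg (inv_nonneg.mpr (hnpos m).le)]
        ring
      rw [heq]
      exact div_le_one_of_le₀ h1 (hnpos m).le
    set y : ℕ → E := fun m => (n m)⁻¹ • x (k m) with hydef
    have hyeq : ∀ m, y m = s • A (z m) + (n m)⁻¹ • w := by
      intro m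
      have hx : x (k m) = s • A (x (k m - 1)) + w := by
        conv_lhs => rw [show k m = (k m - 1) + 1 from (Nat.succ_pred_eq_of_pos
          (Nat.pos_of_ne_zero (hk0 m))).symm]
        exact hxstep _
      have hAz : A (z m) = (n m)⁻¹ • A (x (k m - 1)) :=
        hAhom _ (inv_nonneg.mpr (hnpos m).le) _ (hxM _)
      rw [hydef]
      simp only [hx, hAz, smul_add, smul_smul]
      rw [mul_comm]
    have hynorm : ∀ m, ‖y m‖ = 1 := by
      intro m
      show ‖(n m)⁻¹ • x (k m)‖ = 1
      rw [norm_smul, Real.norm_eq_abs, abs_of_nonneg (inv_nonneg.mpr (hnpos m).le)]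
      exact inv_mul_cancel₀ (ne_of_gt (hnpos m))
    have hD : IsCompact (closure (A '' (M ∩ closedBall (0 : E) 1))) :=
      hAcompact _ (isBounded_closedBall.subset inter_subset_right)
    have hmemD : ∀ m, A (z m) ∈ closure (A '' (M ∩ closedBall (0 : E) 1)) := by
      intro m
      exact subset_closure ⟨z m, ⟨hzM m, by simpa [mem_closedBall_zero_iff] using hz1 m⟩, rfl⟩
    obtain ⟨h, hhD, φ, hφ, hconv⟩ := hD.tendsto_subseq hmemD
    have hn_t : Tendsto (fun m => n (φ m)) atTop atTop := by
      apply tendsto_atTop_mono _ (tendsto_natCast_atTop_atTop (R := ℝ))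
      intro m
      have h1 : (m : ℝ) ≤ (φ m : ℝ) := Nat.cast_le.mpr hφ.le_apply
      have h2 : (0 : ℝ) ≤ ‖x 0‖ := norm_nonneg _
      have h3 := hk1 (φ m)
      exact le_of_lt (by linarith)
    have hinv : Tendsto (fun m => (n (φ m))⁻¹) atTop (𝓝 0) := tendsto_inv_atTop_zero.comp hn_t
    have hyconv : Tendsto (fun m => y (φ m)) atTop (𝓝 (s • h)) := by
      have := (hconv.const_smul s).add (hinv.smul_const w)
      simp only [zero_smul, add_zero] at this
      apply this.congr
      intro m
      rw [hyeq (φ m)]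
      rfl
    have hnorm1 : ‖s • h‖ = 1 := by
      have h2 : Tendsto (fun m => ‖y (φ m)‖) atTop (𝓝 ‖s • h‖) := hyconv.norm
      have h3 : Tendsto (fun m => ‖y (φ m)‖) atTop (𝓝 1) := by
        simpa [hynorm] using tendsto_const_nhds (α := ℝ) (f := atTop (α := ℕ)) (a := 1)
      exact tendsto_nhds_unique h2 h3
    have hyM : s • h ∈ M :=
      hMclosed.mem_of_tendsto hyconv (Eventually.of_forall fun m =>
        hMsmul _ (inv_nonneg.mpr (hnpos (φ m)).le) _ (hxM _))
    have hneg : -(s • h) ∈ M := by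
      have hmem : ∀ m, (n (φ m))⁻¹ • q - y (φ m) ∈ M := by
        intro m
        have := hMsmul _ (inv_nonneg.mpr (hnpos (φ m)).le) _ (hceil (k (φ m)))
        rwa [smul_sub] at this
      have hlim : Tendsto (fun m => (n (φ m))⁻¹ • q - y (φ m)) atTop (𝓝 (-(s • h))) := by
        have := (hinv.smul_const q).sub hyconv
        simpa using this
      exact hMclosed.mem_of_tendsto hlim (Eventually.of_forall hmem)
    have := hMsalient _ hyM hneg
    rw [this, norm_zero] at hnorm1
    exact one_ne_zero hnorm1.symm
  obtain ⟨R, hR⟩ := hbdd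
  -- compact set containing the sequence
  have hD : IsCompact (closure (A '' (M ∩ closedBall (0 : E) R))) :=
    hAcompact _ (isBounded_closedBall.subset inter_subset_right)
  have hK2 : IsCompact ((fun v => s • v + w) '' closure (A '' (M ∩ closedBall (0 : E) R))) :=
    hD.image ((continuous_const_smul s).add continuous_const)
  have hK : IsCompact (((fun v => s • v + w) '' closure (A '' (M ∩ closedBall (0 : E) R))) ∪ {x 0}) :=
    hK2.union isCompact_singleton
  have hxK : ∀ m, x m ∈ ((fun v => s • v + w) '' closure (A '' (M ∩ closedBall (0 : E) R))) ∪ {x 0} := by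
    intro m
    match m with
    | 0 => exact Or.inr rfl
    | Nat.succ m =>
      left
      exact ⟨A (x m), subset_closure ⟨x m, ⟨hxM m, by simpa [mem_closedBall_zero_iff] using hR m⟩, rfl⟩,
        (hxstep m).symm⟩
  obtain ⟨p, hpK, φ, hφ, hφc⟩ := hK.tendsto_subseq hxK
  have hcl : ∀ ψ : ℕ → ℕ, Tendsto ψ atTop atTop → ∀ r : E,
      Tendsto (fun m => x (ψ m)) atTop (𝓝 r) → ∀ j, r - x j ∈ M := by
    intro ψ hψ r hr j
    refine hMclosed.mem_of_tendsto (hr.sub_const (x j)) ?_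
    filter_upwards [hψ.eventually_ge_atTop j] with m hm using hchain j (ψ m) hm
  obtain ⟨r, hrK, θ, hθ, hθc⟩ := hK.tendsto_subseq (fun m => hxK (φ m + 1))
  have hsub : Tendsto (fun m => x (φ (θ m))) atTop (𝓝 p) := hφc.comp hθ.tendsto_atTop
  have h2 : Tendsto (fun m => x (φ (θ m) + 1)) atTop (𝓝 r) := hθc
  have hAr : Tendsto (fun m => s • A (x (φ (θ m))) + w) atTop (𝓝 (s • A p + w)) :=
    (((hAcont.tendsto p).comp hsub).const_smul s).add_const w
  have hreq : r = s • A p + w := by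
    refine tendsto_nhds_unique ?_ hAr
    exact h2.congr fun m => hxstep (φ (θ m))
  -- r = p
  have hψt : Tendsto (fun m => φ (θ m) + 1) atTop atTop :=
    (tendsto_add_atTop_nat 1).comp ((hφ.comp hθ).tendsto_atTop)
  have hrge : ∀ j, r - x j ∈ M := hcl _ hψt r h2
  have hpge : ∀ j, p - x j ∈ M := hcl _ hφ.tendsto_atTop p hφc
  have hrp : r - p ∈ M := by
    have : Tendsto (fun m => r - x (φ m)) atTop (𝓝 (r - p)) := tendsto_const_nhds.sub hφc
    exact hMclosed.mem_of_tendsto this (Eventually.of_forall fun m => hrge (φ m))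
  have hpr : p - r ∈ M := by
    have : Tendsto (fun m => p - x (φ (θ m) + 1)) atTop (𝓝 (p - r)) := tendsto_const_nhds.sub h2
    exact hMclosed.mem_of_tendsto this (Eventually.of_forall fun m => hpge (φ (θ m) + 1))
  have hpr0 : p - r = 0 := hMsalient _ hpr (by rwa [neg_sub])
  have hprq : p = r := by
    have := sub_eq_zero.mp hpr0; exact this
  refine ⟨p, ?_, ?_, ?_⟩
  · exact hMclosed.mem_of_tendsto hφc (Eventually.of_forall fun m => hxM (φ m))
  · simpa [hx0] using hpge 0
  · rw [← hprq] at hreq; exact hreq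

private lemma eig_le {E : Type*} [NormedAddCommGroup E] [NormedSpace ℝ E]
    (M : Set E) (hMclosed : IsClosed M)
    (hMsmul : ∀ t : ℝ, 0 ≤ t → ∀ x ∈ M, t • x ∈ M)
    (hMsalient : ∀ x, x ∈ M → -x ∈ M → x = 0)
    (A : E → E)
    (hAhom : ∀ t : ℝ, 0 ≤ t → ∀ x ∈ M, A (t • x) = t • A x)
    (hAmono : ∀ x y : E, y - x ∈ M → A y - A x ∈ M)
    (u v : E) (huM : u ∈ M) (hune : u ≠ 0)
    (α β : ℝ) (hα : 0 < α) (hβ : 0 < β)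
    (hAu : A u = α • u) (hAv : A v = β • v)
    (c₀ : ℝ) (hc₀ : 0 < c₀) (hcomp : v - c₀ • u ∈ M) : α ≤ β := by
  set Sc : Set ℝ := {c : ℝ | v - c • u ∈ M} with hScdef
  have hbdd : BddAbove Sc := bdd_scal M hMclosed hMsmul hMsalient v u huM hune
  have hclosed : IsClosed Sc :=
    hMclosed.preimage (continuous_const.sub (continuous_id.smul continuous_const))
  have hne : Sc.Nonempty := ⟨c₀, hcomp⟩
  set c : ℝ := sSup Sc with hcdef
  have hcmem : c ∈ Sc := hclosed.csSup_mem hne hbdd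
  have hcpos : 0 < c := lt_of_lt_of_le hc₀ (le_csSup hbdd hcomp)
  -- apply A
  have h1 : A v - A (c • u) ∈ M := hAmono _ _ hcmem
  rw [hAhom c hcpos.le u huM, hAu, hAv] at h1
  -- h1 : β • v - c • α • u ∈ M
  have h2 : v - (β⁻¹ * (c * α)) • u ∈ M := by
    have := hMsmul β⁻¹ (inv_nonneg.mpr hβ.le) _ h1
    rw [smul_sub, smul_smul, smul_smul, smul_smul, inv_mul_cancel₀ (ne_of_gt hβ), one_smul] at this
    rwa [show β⁻¹ * (c * α) = β⁻¹ * c * α by ring]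
  have h3 : β⁻¹ * (c * α) ≤ c := le_csSup hbdd h2
  have h4 : c * α ≤ c * β := by
    have := mul_le_mul_of_nonneg_left h3 hβ.le
    rw [← mul_assoc, mul_inv_cancel₀ (ne_of_gt hβ), one_mul] at this
    linarith [this]
  exact le_of_mul_le_mul_left h4 hcpos

theorem stmt15 {E : Type*} [NormedAddCommGroup E] [NormedSpace ℝ E] [CompleteSpace E]
    (M : Set E) (hMclosed : IsClosed M)
    (hMadd : ∀ x ∈ M, ∀ y ∈ M, x + y ∈ M)
    (hMsmul : ∀ t : ℝ, 0 ≤ t → ∀ x ∈ M, t • x ∈ M)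
    (hMsalient : ∀ x, x ∈ M → -x ∈ M → x = 0)
    (A : E → E)
    -- `A` is completely continuous
    (hAcont : Continuous A)
    (hAcompact : ∀ s : Set E, Bornology.IsBounded s → IsCompact (closure (A '' s)))
    (hAM : ∀ x ∈ M, A x ∈ M)
    -- `A` is positively homogeneous of degree 1 on `M`
    (hAhom : ∀ t : ℝ, 0 ≤ t → ∀ x ∈ M, A (t • x) = t • A x)
    -- `A` is monotone with respect to the order induced by `M`
    (hAmono : ∀ x y : E, y - x ∈ M → A y - A x ∈ M)
    -- `A` is strong relative to `M`
    (hAstrong : ∀ u ∈ Set.range A ∩ M, u ≠ 0 → ∀ v ∈ Set.range A ∩ M, v ≠ 0 →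
      ∃ ρ > (0:ℝ), ∃ τ > (0:ℝ), u - ρ • v ∈ M ∧ v - τ • u ∈ M)
    (w : E) (hw : w ∈ Set.range A ∩ M) (hwne : w ≠ 0)
    (hAw : A w ∈ Set.range A ∩ M) (hAwne : A w ≠ 0) :
    ∃ lam₀ > (0:ℝ),
      (∃ u ∈ M, u ≠ 0 ∧ u = lam₀ • A u) ∧
      (∀ v ∈ M, v ≠ 0 → ∀ lam : ℝ, 0 < lam → v = lam • A v → lam = lam₀) := by
  classical
  have hwM : w ∈ M := hw.2
  have htrans : ∀ x y z : E, x - y ∈ M → y - z ∈ M → x - z ∈ M := by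
    intro x y z h1 h2
    have := hMadd _ h1 _ h2
    simpa using this
  -- bounds a • w ≤ A w ≤ b • w
  obtain ⟨ρ₀, hρ₀, a, ha, hwb0, haw⟩ := hAstrong w hw hwne (A w) hAw hAwne
  set b : ℝ := ρ₀⁻¹ with hbdef
  have hb : 0 < b := inv_pos.mpr hρ₀
  have hbw : b • w - A w ∈ M := by
    have := hMsmul ρ₀⁻¹ (inv_nonneg.mpr hρ₀.le) _ hwb0
    rwa [smul_sub, smul_smul, inv_mul_cancel₀ (ne_of_gt hρ₀), one_smul] at this
  -- haw : A w - a • w ∈ M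
  set J : Set ℝ := {s : ℝ | 0 < s ∧ ∃ p, p ∈ M ∧ p - w ∈ M ∧ p = s • A p + w} with hJdef
  -- J is nonempty
  have hs₀pos : 0 < (2 * b)⁻¹ := by positivity
  have hs₀J : (2 * b)⁻¹ ∈ J := by
    have hq1 : (2:ℝ) • w - w ∈ M := by
      have h : (2:ℝ) • w - w = w := by module
      rw [h]; exact hwM
    have hq2 : (2:ℝ) • w - ((2 * b)⁻¹ • A ((2:ℝ) • w) + w) ∈ M := by
      rw [hAhom 2 (by norm_num) w hwM]
      have key : (2:ℝ) • w - ((2 * b)⁻¹ • ((2:ℝ) • A w) + w) = b⁻¹ • (b • w - A w) := by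
        rw [smul_smul, show (2 * b)⁻¹ * 2 = b⁻¹ by
          field_simp, smul_sub, smul_smul, inv_mul_cancel₀ (ne_of_gt hb), one_smul]
        module
      rw [key]
      exact hMsmul b⁻¹ (inv_nonneg.mpr hb.le) _ hbw
    obtain ⟨p, hp1, hp2, hp3⟩ := exists_sol M hMclosed hMadd hMsmul hMsalient A hAcont hAcompact
      hAM hAhom hAmono w hwM ((2 * b)⁻¹) hs₀pos.le ((2:ℝ) • w) hq1 hq2
    exact ⟨hs₀pos, p, hp1, hp2, hp3⟩
  -- J is bounded above
  have hJb : ∀ s ∈ J, s ≤ a⁻¹ := by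
    intro s hs
    obtain ⟨hspos, p, hpM, hpw, hpeq⟩ := hs
    have hbddS : BddAbove {c : ℝ | p - c • w ∈ M} :=
      bdd_scal M hMclosed hMsmul hMsalient p w hwM hwne
    have hclS : IsClosed {c : ℝ | p - c • w ∈ M} :=
      hMclosed.preimage (continuous_const.sub (continuous_id.smul continuous_const))
    have h1S : (1:ℝ) ∈ {c : ℝ | p - c • w ∈ M} := by
      show p - (1:ℝ) • w ∈ M
      rwa [one_smul]
    set c : ℝ := sSup {c : ℝ | p - c • w ∈ M} with hcdef
    have hcmem : c ∈ {c : ℝ | p - c • w ∈ M} := hclS.csSup_mem ⟨1, h1S⟩ hbddS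
    have hc1 : 1 ≤ c := le_csSup hbddS h1S
    have hcpos : (0:ℝ) < c := lt_of_lt_of_le one_pos hc1
    have hA1 : A p - c • A w ∈ M := by
      have := hAmono _ _ hcmem
      rwa [hAhom c hcpos.le w hwM] at this
    have hA2 : c • A w - (c * a) • w ∈ M := by
      have := hMsmul c hcpos.le _ haw
      rwa [smul_sub, smul_smul] at this
    have hA3 : A p - (c * a) • w ∈ M := htrans _ _ _ hA1 hA2
    have hA4 : p - (s * (c * a) + 1) • w ∈ M := by
      have h5 := hMsmul s hspos.le _ hA3
      rw [smul_sub, smul_smul] at h5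
      have heq : p - (s * (c * a) + 1) • w = s • A p - (s * (c * a)) • w := by
        set v := A p with hvdef
        rw [hpeq]; module
      rw [heq]; exact h5
    have hle : s * (c * a) + 1 ≤ c := le_csSup hbddS hA4
    have hsa : s * a < 1 := by
      by_contra hcon
      push_neg at hcon
      have h6 : c ≤ s * a * c := le_mul_of_one_le_left hcpos.le hcon
      have h7 : s * (c * a) = s * a * c := by ring
      linarith
    have := mul_le_mul_of_nonneg_right hsa.le (inv_nonneg.mpr ha.le)
    rwa [mul_assoc, mul_inv_cancel₀ (ne_of_gt ha), mul_one, one_mul] at this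
  have hJbdd : BddAbove J := ⟨a⁻¹, hJb⟩
  set sS : ℝ := sSup J with hsSdef
  have hsSpos : 0 < sS := lt_of_lt_of_le hs₀pos (le_csSup hJbdd hs₀J)
  -- sup is not attained
  have hnotJ : sS ∉ J := by
    intro hmem
    obtain ⟨_, p, hpM, hpw, hpeq⟩ := hmem
    have hApw : A p - A w ∈ M := hAmono _ _ hpw
    have hApne : A p ≠ 0 := by
      intro h
      rw [h, zero_sub] at hApw
      exact hAwne (hMsalient _ (hAM w hwM) hApw)
    obtain ⟨ρ, hρ, τ, hτ, h1, _⟩ := hAstrong w hw hwne (A p) ⟨⟨p, rfl⟩, hAM p hpM⟩ hApne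
    -- h1 : w - ρ • A p ∈ M
    have hs'pos : 0 < sS + ρ / 2 := by linarith
    have hq1 : (2:ℝ) • p - w ∈ M := by
      have h : (2:ℝ) • p - w = (p - w) + p := by module
      rw [h]; exact hMadd _ hpw _ hpM
    have hq2 : (2:ℝ) • p - ((sS + ρ / 2) • A ((2:ℝ) • p) + w) ∈ M := by
      rw [hAhom 2 (by norm_num) p hpM]
      have hkey : (2:ℝ) • p - ((sS + ρ / 2) • ((2:ℝ) • A p) + w) = w - ρ • A p := by
        set v := A p with hvdef
        rw [hpeq]; module
      rw [hkey]; exact h1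
    obtain ⟨p', hp'1, hp'2, hp'3⟩ := exists_sol M hMclosed hMadd hMsmul hMsalient A hAcont
      hAcompact hAM hAhom hAmono w hwM (sS + ρ / 2) hs'pos.le ((2:ℝ) • p) hq1 hq2
    have hmem' : sS + ρ / 2 ∈ J := ⟨hs'pos, p', hp'1, hp'2, hp'3⟩
    have := le_csSup hJbdd hmem'
    linarith
  -- approximating sequence
  set sn : ℕ → ℝ := fun n => sS - sS / ((n : ℝ) + 2) with hsndef
  have hsnpos : ∀ n, 0 < sn n := by
    intro n
    have h2 : sS / ((n : ℝ) + 2) < sS := by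
      apply div_lt_self hsSpos
      have : (0:ℝ) ≤ (n:ℝ) := Nat.cast_nonneg n
      linarith
    show 0 < sS - sS / ((n : ℝ) + 2)
    linarith
  have hsnlt : ∀ n, sn n < sS := by
    intro n
    have h2 : 0 < sS / ((n : ℝ) + 2) := by positivity
    show sS - sS / ((n : ℝ) + 2) < sS
    linarith
  have hsnlim : Tendsto sn atTop (𝓝 sS) := by
    have h1 : Tendsto (fun n : ℕ => sS / ((n:ℝ) + 2)) atTop (𝓝 0) :=
      Tendsto.div_atTop tendsto_const_nhds
        (tendsto_atTop_add_const_right atTop 2 tendsto_natCast_atTop_atTop)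
    have h2 := (tendsto_const_nhds : Tendsto (fun _ : ℕ => sS) atTop (𝓝 sS)).sub h1
    simpa using h2
  have hsn : ∀ n : ℕ, ∃ p, p ∈ M ∧ p - w ∈ M ∧ p = sn n • A p + w := by
    intro n
    obtain ⟨s'', hs''J, hgt⟩ := exists_lt_of_lt_csSup ⟨(2 * b)⁻¹, hs₀J⟩ (hsnlt n)
    obtain ⟨hs''pos, p'', hp''M, hp''w, hp''eq⟩ := hs''J
    have hq2 : p'' - (sn n • A p'' + w) ∈ M := by
      have heq : p'' - (sn n • A p'' + w) = (s'' - sn n) • A p'' := by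
        set v := A p'' with hvdef
        rw [hp''eq]; module
      rw [heq]
      exact hMsmul _ (by linarith) _ (hAM p'' hp''M)
    exact exists_sol M hMclosed hMadd hMsmul hMsalient A hAcont hAcompact hAM hAhom hAmono
      w hwM (sn n) (hsnpos n).le p'' hp''w hq2
  choose p hpM hpw hpeq using hsn
  -- case distinction on blow-up of the norms
  by_cases hT : Tendsto (fun n => ‖p n‖) atTop atTop
  swap
  · -- no blow-up : the sup would be attained, contradiction
    exfalso
    rw [tendsto_atTop_atTop] at hT
    push_neg at hT
    obtain ⟨R, hR⟩ := hT
    have hfr : ∃ᶠ n in atTop, ‖p n‖ < R := by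
      rw [frequently_atTop]
      intro i
      obtain ⟨n, hn1, hn2⟩ := hR i
      exact ⟨n, hn1, hn2⟩
    obtain ⟨φ, hφ, hφlt⟩ := extraction_of_frequently_atTop hfr
    have hDR : IsCompact (closure (A '' (M ∩ closedBall (0:E) (max R 0)))) :=
      hAcompact _ (isBounded_closedBall.subset inter_subset_right)
    have hmem : ∀ m, A (p (φ m)) ∈ closure (A '' (M ∩ closedBall (0:E) (max R 0))) := by
      intro m
      refine subset_closure ⟨p (φ m), ⟨hpM _, ?_⟩, rfl⟩
      rw [mem_closedBall_zero_iff]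
      exact (hφlt m).le.trans (le_max_left R 0)
    obtain ⟨g, hg, θ, hθ, hgc⟩ := hDR.tendsto_subseq hmem
    have hsnc : Tendsto (fun m => sn (φ (θ m))) atTop (𝓝 sS) :=
      hsnlim.comp ((hφ.comp hθ).tendsto_atTop)
    have hpc : Tendsto (fun m => p (φ (θ m))) atTop (𝓝 (sS • g + w)) := by
      have := (hsnc.smul hgc).add_const w
      exact this.congr fun m => (hpeq (φ (θ m))).symm
    have hgM : g ∈ M :=
      hMclosed.mem_of_tendsto hgc (Eventually.of_forall fun m => hAM _ (hpM _))
    have hAg : A (sS • g + w) = g :=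
      tendsto_nhds_unique ((hAcont.tendsto _).comp hpc) hgc
    refine hnotJ ⟨hsSpos, sS • g + w, ?_, ?_, ?_⟩
    · exact hMadd _ (hMsmul _ hsSpos.le _ hgM) _ hwM
    · have h : sS • g + w - w = sS • g := by module
      rw [h]; exact hMsmul _ hsSpos.le _ hgM
    · rw [hAg]
  -- blow-up case : normalize to get an eigenvector
  obtain ⟨N, hN⟩ := eventually_atTop.mp (hT.eventually_ge_atTop 1)
  have hP1 : ∀ m, (1:ℝ) ≤ ‖p (m + N)‖ := fun m => hN _ (Nat.le_add_left N m)
  have hPpos : ∀ m, (0:ℝ) < ‖p (m + N)‖ := fun m => lt_of_lt_of_le one_pos (hP1 m)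
  set q : ℕ → E := fun m => ‖p (m + N)‖⁻¹ • p (m + N) with hqdef
  have hqM : ∀ m, q m ∈ M := fun m => hMsmul _ (inv_nonneg.mpr (hPpos m).le) _ (hpM _)
  have hqnorm : ∀ m, ‖q m‖ = 1 := by
    intro m
    show ‖‖p (m + N)‖⁻¹ • p (m + N)‖ = 1
    rw [norm_smul, Real.norm_eq_abs, abs_of_nonneg (inv_nonneg.mpr (hPpos m).le)]
    exact inv_mul_cancel₀ (ne_of_gt (hPpos m))
  have hqeq : ∀ m, q m = sn (m + N) • A (q m) + ‖p (m + N)‖⁻¹ • w := by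
    intro m
    have hAq : A (q m) = ‖p (m + N)‖⁻¹ • A (p (m + N)) :=
      hAhom _ (inv_nonneg.mpr (hPpos m).le) _ (hpM _)
    have h0 := congrArg (HSMul.hSMul (‖p (m + N)‖⁻¹ : ℝ) : E → E) (hpeq (m + N))
    rw [smul_add, smul_smul, mul_comm, ← smul_smul, ← hAq] at h0
    exact h0
  have hD1 : IsCompact (closure (A '' (M ∩ closedBall (0:E) 1))) :=
    hAcompact _ (isBounded_closedBall.subset inter_subset_right)
  have hmem : ∀ m, A (q m) ∈ closure (A '' (M ∩ closedBall (0:E) 1)) := by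
    intro m
    refine subset_closure ⟨q m, ⟨hqM m, ?_⟩, rfl⟩
    rw [mem_closedBall_zero_iff]
    exact (hqnorm m).le
  obtain ⟨g, hg, θ, hθ, hgc⟩ := hD1.tendsto_subseq hmem
  have hshift : Tendsto (fun m => θ m + N) atTop atTop :=
    (tendsto_add_atTop_nat N).comp hθ.tendsto_atTop
  have hsnc : Tendsto (fun m => sn (θ m + N)) atTop (𝓝 sS) := hsnlim.comp hshift
  have hnormt : Tendsto (fun m => ‖p (θ m + N)‖) atTop atTop := hT.comp hshift
  have hinv : Tendsto (fun m => ‖p (θ m + N)‖⁻¹) atTop (𝓝 0) := tendsto_inv_atTop_zero.comp hnormt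
  have hqc : Tendsto (fun m => q (θ m)) atTop (𝓝 (sS • g)) := by
    have := (hsnc.smul hgc).add (hinv.smul_const w)
    simp only [zero_smul, add_zero] at this
    exact this.congr fun m => (hqeq (θ m)).symm
  have hunorm : ‖sS • g‖ = 1 := by
    have h1 : Tendsto (fun m => ‖q (θ m)‖) atTop (𝓝 ‖sS • g‖) := hqc.norm
    have h2 : Tendsto (fun m => ‖q (θ m)‖) atTop (𝓝 1) := by
      simp only [hqnorm]
      exact (tendsto_const_nhds : Tendsto (fun _ : ℕ => (1:ℝ)) atTop (𝓝 1))
    exact tendsto_nhds_unique h1 h2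
  have huM : sS • g ∈ M :=
    hMclosed.mem_of_tendsto hqc (Eventually.of_forall fun m => hqM _)
  have hAu : A (sS • g) = g := tendsto_nhds_unique ((hAcont.tendsto _).comp hqc) hgc
  have hune : sS • g ≠ 0 := by
    intro h
    rw [h, norm_zero] at hunorm
    exact one_ne_zero hunorm.symm
  have hueq : sS • g = sS • A (sS • g) := by rw [hAu]
  -- conclusion
  refine ⟨sS, hsSpos, ⟨sS • g, huM, hune, hueq⟩, ?_⟩
  intro v hv hvne lam hlam hveq
  obtain ⟨u, hudef⟩ : ∃ u : E, u = sS • g := ⟨_, rfl⟩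
  have huM' : u ∈ M := by rw [hudef]; exact huM
  have hune' : u ≠ 0 := by rw [hudef]; exact hune
  have hueq' : u = sS • A u := by rw [hudef]; exact hueq
  have hAvne : A v ≠ 0 := by
    intro h
    exact hvne (by rw [hveq, h, smul_zero])
  have hAune : A u ≠ 0 := by
    intro h
    exact hune' (by rw [hueq', h, smul_zero])
  have hAv_eig : A v = lam⁻¹ • v := by
    have h0 := congrArg (HSMul.hSMul (lam⁻¹ : ℝ) : E → E) hveq
    rw [smul_smul, inv_mul_cancel₀ (ne_of_gt hlam), one_smul] at h0
    exact h0.symm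
  have hAu_eig : A u = sS⁻¹ • u := by
    have h0 := congrArg (HSMul.hSMul (sS⁻¹ : ℝ) : E → E) hueq'
    rw [smul_smul, inv_mul_cancel₀ (ne_of_gt hsSpos), one_smul] at h0
    exact h0.symm
  obtain ⟨ρ, hρ, τ, hτ, h1, h2⟩ := hAstrong (A v) ⟨⟨v, rfl⟩, hAM v hv⟩ hAvne
    (A u) ⟨⟨u, rfl⟩, hAM u huM'⟩ hAune
  -- h1 : A v - ρ • A u ∈ M ; h2 : A u - τ • A v ∈ M
  have hc1 : v - (lam * ρ * sS⁻¹) • u ∈ M := by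
    rw [hAv_eig, hAu_eig] at h1
    have h3 := hMsmul lam hlam.le _ h1
    rw [smul_sub, smul_smul, smul_smul, smul_smul, mul_inv_cancel₀ (ne_of_gt hlam),
      one_smul] at h3
    exact h3
  have hle1 : sS⁻¹ ≤ lam⁻¹ :=
    eig_le M hMclosed hMsmul hMsalient A hAhom hAmono u v huM' hune' sS⁻¹ lam⁻¹
      (inv_pos.mpr hsSpos) (inv_pos.mpr hlam) hAu_eig hAv_eig _
      (mul_pos (mul_pos hlam hρ) (inv_pos.mpr hsSpos)) hc1
  have hc2 : u - (sS * τ * lam⁻¹) • v ∈ M := by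
    rw [hAv_eig, hAu_eig] at h2
    have h3 := hMsmul sS hsSpos.le _ h2
    rw [smul_sub, smul_smul, smul_smul, smul_smul, mul_inv_cancel₀ (ne_of_gt hsSpos),
      one_smul] at h3
    exact h3
  have hle2 : lam⁻¹ ≤ sS⁻¹ :=
    eig_le M hMclosed hMsmul hMsalient A hAhom hAmono v u hv hvne lam⁻¹ sS⁻¹
      (inv_pos.mpr hlam) (inv_pos.mpr hsSpos) hAv_eig hAu_eig _
      (mul_pos (mul_pos hsSpos hτ) (inv_pos.mpr hlam)) hc2
  have hinveq : lam⁻¹ = sS⁻¹ := le_antisymm hle2 hle1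
  exact inv_injective hinveq
end

section
/- Let Ω ⊂ ℝ^N be a bounded convex domain and let u, v ∈ C(Ω̄) be convex functions such that the Monge-Ampère measure of u dominates that of v on every Borel set e ⊂ Ω (μ[u](e) ≥ μ[v](e)) and u ≤ v on ∂Ω. Then u(x) ≤ v(x) for all x ∈ Ω. -/
/-!
Suppose `v z < u z` at some `z ∈ Ω`. For small `δ > 0` the function `w₁ = (1 + δ) u - δ K`
(with `K > max u`) lies below `v` on `∂Ω` and `∂w₁ = (1 + δ) ∂u`. The comparison principle for
normal images, `∂w(G) ⊆ ∂v(G)` on `G = {v < w} ⋐ Ω` (lower a supporting hyperplane of `w` until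
it touches `v`; the contact point cannot lie on `∂G`, where `w ≤ v`), then gives
`(1 + δ)ᴺ |∂u(G₁)| ≤ |∂v(G₁)| ≤ |∂u(G₁)|` on `G₁ = {v < w₁}`, and `|∂u(G₁)| < ∞` forces
`|∂u(G₁)| = 0`. On the other hand `w₂ = u + δ |x - z|² - C ≤ w₁` still exceeds `v` at `z`, and
the uniform convexity of `δ |x - z|²` puts a whole ball of slopes around a subgradient of `u` at
`z` into `∂w₂(G₂) ⊆ ∂v(G₂)`, so `0 < |∂v(G₂)| ≤ |∂u(G₂)| ≤ |∂u(G₁)|`.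
-/

open Set MeasureTheory

/-- The normal mapping (subdifferential image) of `u : Ω → ℝ` over a subset `e`. -/
def nmImage {n : ℕ} (Ω : Set (EuclideanSpace ℝ (Fin n)))
    (u : EuclideanSpace ℝ (Fin n) → ℝ) (e : Set (EuclideanSpace ℝ (Fin n))) :
    Set (EuclideanSpace ℝ (Fin n)) :=
  {p | ∃ x₀ ∈ e, ∀ x ∈ Ω, u x₀ + @inner ℝ _ _ p (x - x₀) ≤ u x}

open Metric Bornology Pointwise

theorem ContinuousOn.isOpen_sep_lt {X : Type*} [TopologicalSpace X] {s : Set X}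
    {f g : X → ℝ} (hs : IsOpen s) (hf : ContinuousOn f s) (hg : ContinuousOn g s) :
    IsOpen {x ∈ s | f x < g x} := by
  have h := (hg.sub hf).isOpen_inter_preimage hs (isOpen_Ioi (a := (0 : ℝ)))
  simp only [preimage, mem_Ioi, sub_pos, Pi.sub_apply] at h
  exact h

theorem ConvexOn.exists_subgradient_of_mem_interior {E : Type*} [NormedAddCommGroup E]
    [NormedSpace ℝ E] [FiniteDimensional ℝ E] {s : Set E} {f : E → ℝ} (hf : ConvexOn ℝ s f) {z : E}
    (hz : z ∈ interior s) : ∃ g : StrongDual ℝ E, ∀ x ∈ s, f z + g (x - z) ≤ f x := by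
  have hfi : ConvexOn ℝ (interior s) f := hf.subset interior_subset hf.1.interior
  have hopen : IsOpen {p : E × ℝ | p.1 ∈ interior s ∧ f p.1 < p.2} :=
    ContinuousOn.isOpen_sep_lt (isOpen_interior.preimage continuous_fst)
      (hf.continuousOn_interior.comp continuousOn_fst fun _ hp => hp) continuousOn_snd
  obtain ⟨L, hL⟩ := geometric_hahn_banach_open_point hfi.convex_strict_epigraph hopen
    (x := (z, f z)) fun h => lt_irrefl _ h.2
  set c := L (0, 1)
  have hL_apply (x : E) (t : ℝ) : L (x, t) = L (x, 0) + t * c := by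
    have : ((x, t) : E × ℝ) = (x, 0) + t • (0, 1) := by simp
    rw [this, map_add, map_smul, smul_eq_mul]
  have hc : c < 0 := by
    have := hL (z, f z + 1) ⟨hz, lt_add_one _⟩
    rw [hL_apply z (f z + 1), hL_apply z (f z)] at this
    linarith
  set g : StrongDual ℝ E := (-c)⁻¹ • L.comp (.inl ℝ E ℝ)
  have hg (y : E) : g y = L (y, 0) / -c := by
    simp [g, div_eq_inv_mul]
  have hg_interior : ∀ x ∈ interior s, f z + g (x - z) ≤ f x := by
    intro x hx
    refine le_of_forall_gt_imp_ge_of_dense fun t ht => ?_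
    have := hL (x, t) ⟨hx, ht⟩
    rw [hL_apply x t, hL_apply z (f z)] at this
    have : g (x - z) ≤ t - f z := by
      rw [map_sub, hg, hg, ← sub_div, div_le_iff₀ (neg_pos.2 hc)]
      linarith
    linarith
  refine ⟨g, fun x hx => ?_⟩
  have hm : x + (1 / 2 : ℝ) • (z - x) ∈ interior s :=
    hf.1.add_smul_sub_mem_interior hx hz ⟨by norm_num, by norm_num⟩
  have hm_le : f (x + (1 / 2 : ℝ) • (z - x)) ≤ 1 / 2 * f z + 1 / 2 * f x := by
    have := hf.2 (interior_subset hz) hx (by norm_num : (0 : ℝ) ≤ 1 / 2)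
      (by norm_num : (0 : ℝ) ≤ 1 / 2) (by norm_num)
    rwa [show x + (1 / 2 : ℝ) • (z - x) = (1 / 2 : ℝ) • z + (1 / 2 : ℝ) • x by module]
  have hgm : g (x + (1 / 2 : ℝ) • (z - x) - z) = 1 / 2 * g (x - z) := by
    rw [← smul_eq_mul, ← map_smul]; congr 1; module
  have := hg_interior _ hm
  linarith

theorem closure_sep_lt_subset {X : Type*} [TopologicalSpace X] {Ω : Set X} {v w : X → ℝ}
    (hΩ : IsOpen Ω) (hv : ContinuousOn v (closure Ω)) (hw : ContinuousOn w (closure Ω))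
    (hfr : ∀ x ∈ frontier Ω, w x < v x) : closure {x ∈ Ω | v x < w x} ⊆ Ω := by
  intro x hx
  have hle : closure {x ∈ Ω | v x < w x} ⊆ {x ∈ closure Ω | v x ≤ w x} :=
    closure_minimal (fun _ hy => ⟨subset_closure hy.1, hy.2.le⟩)
      (isClosed_closure.isClosed_le hv hw)
  by_contra hxΩ
  have := hfr x (by rw [hΩ.frontier_eq]; exact ⟨(hle hx).1, hxΩ⟩)
  linarith [(hle hx).2]

theorem MeasureTheory.Measure.addHaar_eq_zero_of_smul_le {E : Type*} [NormedAddCommGroup E]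
    [NormedSpace ℝ E] [MeasurableSpace E] [BorelSpace E] [FiniteDimensional ℝ E]
    (μ : Measure E) [μ.IsAddHaarMeasure] (hE : 0 < Module.finrank ℝ E) {a : ℝ} (ha : 1 < a)
    {S : Set E} (hS : μ S ≠ ⊤) (h : μ (a • S) ≤ μ S) : μ S = 0 := by
  by_contra h0
  rw [Measure.addHaar_smul, abs_of_pos (pow_pos (by linarith) _)] at h
  have h1 : ENNReal.ofReal (a ^ Module.finrank ℝ E) ≤ 1 :=
    (ENNReal.mul_le_mul_iff_left h0 hS).1 (by rwa [one_mul])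
  rw [ENNReal.ofReal_le_one] at h1
  exact (one_lt_pow₀ ha hE.ne').not_ge h1

section nmImage

variable {n : ℕ} {Ω e G : Set (EuclideanSpace ℝ (Fin n))} {u v w : EuclideanSpace ℝ (Fin n) → ℝ}

theorem nmImage_mono {e' : Set (EuclideanSpace ℝ (Fin n))} (h : e ⊆ e') :
    nmImage Ω u e ⊆ nmImage Ω u e' := fun _ ⟨x₀, hx₀, hp⟩ => ⟨x₀, h hx₀, hp⟩

theorem nmImage_mul_add {a : ℝ} (ha : 0 < a) (b : ℝ) :
    nmImage Ω (fun x => a * u x + b) e = a • nmImage Ω u e := by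
  ext p
  rw [mem_smul_set_iff_inv_smul_mem₀ ha.ne']
  simp only [nmImage, mem_ofPred_eq, real_inner_smul_left]
  refine exists_congr fun x₀ => and_congr_right fun _ => forall₂_congr fun x _ => ?_
  conv_rhs => rw [← mul_le_mul_iff_of_pos_left ha, mul_add, mul_inv_cancel_left₀ ha.ne']
  constructor <;> intro h <;> linarith

theorem isBounded_nmImage {ρ : ℝ} (hρ : 0 < ρ) (he : thickening ρ e ⊆ Ω)
    (hu_above : BddAbove (u '' Ω)) (hu_below : BddBelow (u '' e)) :
    IsBounded (nmImage Ω u e) := by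
  obtain ⟨K, hK⟩ := hu_above
  obtain ⟨m, hm⟩ := hu_below
  refine (isBounded_closedBall (x := 0) (r := 2 * (K - m) / ρ)).subset ?_
  rintro p ⟨x, hx, hp⟩
  set y := x + (ρ / 2 * ‖p‖⁻¹) • p
  have hnorm : ‖p‖⁻¹ * ‖p‖ ≤ 1 := inv_mul_le_one_of_le₀ le_rfl (norm_nonneg p)
  have hy : y ∈ Ω := he <| mem_thickening_iff.2 ⟨x, hx, by
    rw [dist_eq_norm, add_sub_cancel_left, norm_smul, Real.norm_of_nonneg (by positivity),
      mul_assoc]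
    nlinarith⟩
  have hinner : inner ℝ p (y - x) = ρ / 2 * ‖p‖ := by
    rw [add_sub_cancel_left, real_inner_smul_right, real_inner_self_eq_norm_sq, mul_assoc, sq,
      ← mul_assoc ‖p‖⁻¹, inv_mul_mul_self]
  have := hp y hy
  have := hK (mem_image_of_mem u hy)
  have := hm (mem_image_of_mem u hx)
  rw [mem_closedBall, dist_zero_right, le_div_iff₀ hρ]
  linarith

theorem nmImage_subset_nmImage_of_lt (hv : ContinuousOn v (closure Ω))
    (hvc : ConvexOn ℝ (closure Ω) v) (hG_open : IsOpen {x ∈ Ω | v x < w x})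
    (hG_cl : closure {x ∈ Ω | v x < w x} ⊆ Ω) (hG_bd : IsBounded {x ∈ Ω | v x < w x}) :
    nmImage Ω w {x ∈ Ω | v x < w x} ⊆ nmImage Ω v {x ∈ Ω | v x < w x} := by
  rintro p ⟨x₁, hx₁, hp⟩
  set G := {x ∈ Ω | v x < w x}
  set h := fun x => v x - inner ℝ p x
  have hh : ConvexOn ℝ (closure Ω) h :=
    hvc.sub ((innerSL ℝ p).toLinearMap.concaveOn hvc.1)
  obtain ⟨x₂, hx₂, hmin⟩ := hG_bd.isCompact_closure.exists_isMinOn ⟨x₁, subset_closure hx₁⟩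
    ((hv.mono (hG_cl.trans subset_closure)).sub
      (continuous_const.inner continuous_id).continuousOn)
  have hx₂G : x₂ ∈ G := by
    by_contra hx₂G
    have hwv : w x₂ ≤ v x₂ := not_lt.1 fun h => hx₂G ⟨hG_cl hx₂, h⟩
    have := hp x₂ (hG_cl hx₂)
    have : h x₂ ≤ h x₁ := hmin (subset_closure hx₁)
    simp only [h, inner_sub_right] at *
    linarith [hx₁.2]
  have hglobal : IsMinOn h (closure Ω) x₂ :=
    IsMinOn.of_isLocalMinOn_of_convexOn (subset_closure (hG_cl hx₂))
      ((hmin.isLocalMin (Filter.mem_of_superset (hG_open.mem_nhds hx₂G) subset_closure)).on _) hh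
  refine ⟨x₂, hx₂G, fun y hy => ?_⟩
  have : h x₂ ≤ h y := hglobal (subset_closure hy)
  simp only [h, inner_sub_right] at *
  linarith

theorem ball_subset_nmImage (hΩ : IsCompact (closure Ω)) (hu : ContinuousOn u (closure Ω))
    {z r : EuclideanSpace ℝ (Fin n)} (hz : z ∈ Ω)
    (hr : ∀ x ∈ closure Ω, u z + inner ℝ r (x - z) ≤ u x) {δ ρ c : ℝ} (hδ : 0 < δ)
    (hG : closedBall z ρ ⊆ G) :
    ball r (δ * ρ) ⊆ nmImage Ω (fun x => u x + δ * ‖x - z‖ ^ 2 - c) G := by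
  intro s hs
  rw [mem_ball, dist_eq_norm] at hs
  obtain ⟨xs, hxs, hmin⟩ := hΩ.exists_isMinOn ⟨z, subset_closure hz⟩
    (f := fun x => u x + δ * ‖x - z‖ ^ 2 - c - inner ℝ s x) (by fun_prop)
  have hclose : δ * ‖xs - z‖ ^ 2 ≤ ‖s - r‖ * ‖xs - z‖ := by
    have h₁ : u xs + δ * ‖xs - z‖ ^ 2 - c - inner ℝ s xs ≤ u z - c - inner ℝ s z := by
      simpa using hmin (subset_closure hz)
    have h₂ := hr xs hxs
    have h₃ := real_inner_le_norm (s - r) (xs - z)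
    rw [inner_sub_right] at h₂
    rw [inner_sub_left, inner_sub_right, inner_sub_right] at h₃
    linarith
  have hxs_ball : ‖xs - z‖ ≤ ρ := by
    by_contra! hlt
    have hρ : 0 < ρ := pos_of_mul_pos_right ((norm_nonneg _).trans_lt hs) hδ.le
    have hpos : 0 < ‖xs - z‖ := hρ.trans hlt
    nlinarith [mul_lt_mul_of_pos_right hs hpos, mul_lt_mul_of_pos_left hlt (mul_pos hδ hpos)]
  refine ⟨xs, hG (mem_closedBall_iff_norm.2 hxs_ball), fun y hy => ?_⟩
  have := isMinOn_iff.1 hmin y (subset_closure hy)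
  simp only [inner_sub_right] at *
  linarith

theorem volume_nmImage_sep_lt_mul_add_eq_zero (hn : 0 < n) (hΩ_open : IsOpen Ω)
    (hΩ_bd : IsBounded Ω) (hu : ContinuousOn u (closure Ω)) (hv : ContinuousOn v (closure Ω))
    (hvc : ConvexOn ℝ (closure Ω) v)
    (hdom : ∀ e : Set (EuclideanSpace ℝ (Fin n)), e ⊆ Ω → MeasurableSet e →
      volume (nmImage Ω v e) ≤ volume (nmImage Ω u e))
    {a b : ℝ} (ha : 1 < a) (hfr : ∀ x ∈ frontier Ω, a * u x + b < v x) :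
    volume (nmImage Ω u {x ∈ Ω | v x < a * u x + b}) = 0 := by
  set G := {x ∈ Ω | v x < a * u x + b}
  have hw : ContinuousOn (fun x => a * u x + b) (closure Ω) := by fun_prop
  have hG_open : IsOpen G := ContinuousOn.isOpen_sep_lt hΩ_open
    (hv.mono subset_closure) (hw.mono subset_closure)
  have hG_cl : closure G ⊆ Ω := closure_sep_lt_subset hΩ_open hv hw hfr
  have hG_bd : IsBounded G := hΩ_bd.subset (sep_subset _ _)
  have hu_above := hΩ_bd.isCompact_closure.bddAbove_image hu
  have hu_below := hΩ_bd.isCompact_closure.bddBelow_image hu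
  obtain ⟨ρ, hρ, hthick⟩ :=
    hG_bd.isCompact_closure.exists_thickening_subset_open hΩ_open hG_cl
  have hbounded : IsBounded (nmImage Ω u G) :=
    isBounded_nmImage hρ (thickening_closure (s := G) ▸ hthick)
      (hu_above.mono (image_mono subset_closure))
      (hu_below.mono (image_mono (sep_subset _ _ |>.trans subset_closure)))
  refine Measure.addHaar_eq_zero_of_smul_le volume (by rwa [finrank_euclideanSpace_fin]) ha
    hbounded.measure_lt_top.ne ?_
  rw [← nmImage_mul_add (by linarith) b]
  exact (measure_mono (nmImage_subset_nmImage_of_lt hv hvc hG_open hG_cl hG_bd)).trans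
    (hdom G (sep_subset _ _) hG_open.measurableSet)

theorem volume_nmImage_sep_lt_add_sq_pos (hΩ_open : IsOpen Ω) (hΩ_bd : IsBounded Ω)
    (hu : ContinuousOn u (closure Ω)) (huc : ConvexOn ℝ (closure Ω) u)
    (hv : ContinuousOn v (closure Ω)) (hvc : ConvexOn ℝ (closure Ω) v)
    (hdom : ∀ e : Set (EuclideanSpace ℝ (Fin n)), e ⊆ Ω → MeasurableSet e →
      volume (nmImage Ω v e) ≤ volume (nmImage Ω u e))
    {z : EuclideanSpace ℝ (Fin n)} (hz : z ∈ Ω) {δ c : ℝ} (hδ : 0 < δ) (hzc : v z < u z - c)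
    (hfr : ∀ x ∈ frontier Ω, u x + δ * ‖x - z‖ ^ 2 - c < v x) :
    0 < volume (nmImage Ω u {x ∈ Ω | v x < u x + δ * ‖x - z‖ ^ 2 - c}) := by
  set w := fun x => u x + δ * ‖x - z‖ ^ 2 - c
  set G := {x ∈ Ω | v x < w x}
  have hw : ContinuousOn w (closure Ω) := by fun_prop
  have hG_open : IsOpen G := ContinuousOn.isOpen_sep_lt hΩ_open
    (hv.mono subset_closure) (hw.mono subset_closure)
  have hzG : z ∈ G := ⟨hz, by simpa [w] using hzc⟩
  obtain ⟨ρ, hρ, hball⟩ := nhds_basis_closedBall.mem_iff.1 (hG_open.mem_nhds hzG)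
  obtain ⟨g, hg⟩ :=
    huc.exists_subgradient_of_mem_interior (interior_maximal subset_closure hΩ_open hz)
  set r := (InnerProductSpace.toDual ℝ _).symm g
  have hr : ∀ x ∈ closure Ω, u z + inner ℝ r (x - z) ≤ u x := by
    simpa only [r, InnerProductSpace.toDual_symm_apply] using hg
  calc 0 < volume (ball r (δ * ρ)) := measure_ball_pos _ _ (by positivity)
    _ ≤ volume (nmImage Ω w G) :=
      measure_mono (ball_subset_nmImage hΩ_bd.isCompact_closure hu hz hr hδ hball)
    _ ≤ volume (nmImage Ω v G) := measure_mono <| nmImage_subset_nmImage_of_lt hv hvc hG_open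
      (closure_sep_lt_subset hΩ_open hv hw hfr) (hΩ_bd.subset (sep_subset _ _))
    _ ≤ volume (nmImage Ω u G) := hdom G (sep_subset _ _) hG_open.measurableSet

end nmImage

theorem stmt16_general (N : ℕ) (hN : 2 ≤ N)
    (Ω : Set (EuclideanSpace ℝ (Fin N))) (hΩopen : IsOpen Ω)
    (hΩbd : Bornology.IsBounded Ω)
    (u v : EuclideanSpace ℝ (Fin N) → ℝ)
    (hu : ContinuousOn u (closure Ω)) (hv : ContinuousOn v (closure Ω))
    (huc : ConvexOn ℝ (closure Ω) u) (hvc : ConvexOn ℝ (closure Ω) v)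
    (hdom : ∀ e : Set (EuclideanSpace ℝ (Fin N)), e ⊆ Ω → MeasurableSet e →
      volume (nmImage Ω v e) ≤ volume (nmImage Ω u e))
    (hbd : ∀ x ∈ frontier Ω, u x ≤ v x) :
    ∀ x ∈ Ω, u x ≤ v x := by
  intro z hz
  by_contra! hvu
  obtain ⟨K, hK⟩ : ∃ K, ∀ x ∈ closure Ω, u x < K := by
    obtain ⟨K, hK⟩ := hΩbd.isCompact_closure.bddAbove_image hu
    exact ⟨K + 1, fun x hx => (hK (mem_image_of_mem u hx)).trans_lt (lt_add_one K)⟩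
  obtain ⟨m, hm⟩ := hΩbd.isCompact_closure.bddBelow_image hu
  obtain ⟨d, hd⟩ := hΩbd.closure.subset_closedBall z
  obtain ⟨δ, hδ, hδz⟩ := exists_pos_mul_lt (sub_pos.2 hvu) (K - m + d ^ 2)
  have hw₁ (x) (hx : x ∈ closure Ω) : (1 + δ) * u x + -(δ * K) < u x := by
    nlinarith [hK x hx]
  have hw₂ (x) (hx : x ∈ closure Ω) :
      u x + δ * ‖x - z‖ ^ 2 - δ * (K - m + d ^ 2) ≤ (1 + δ) * u x + -(δ * K) := by
    have := pow_le_pow_left₀ (norm_nonneg _) (mem_closedBall_iff_norm.1 (hd hx)) 2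
    nlinarith [hm (mem_image_of_mem u hx)]
  have hfr₁ (x) (hx : x ∈ frontier Ω) : (1 + δ) * u x + -(δ * K) < v x :=
    (hw₁ x (frontier_subset_closure hx)).trans_le (hbd x hx)
  have hnull := volume_nmImage_sep_lt_mul_add_eq_zero (by omega) hΩopen hΩbd hu hv hvc hdom
    (by linarith) hfr₁
  have hpos := volume_nmImage_sep_lt_add_sq_pos hΩopen hΩbd hu huc hv hvc hdom hz hδ
    (by linarith) fun x hx => (hw₂ x (frontier_subset_closure hx)).trans_lt (hfr₁ x hx)
  refine (hpos.trans_le (measure_mono (nmImage_mono ?_))).ne' hnull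
  exact fun x hx => ⟨hx.1, hx.2.trans_le (hw₂ x (subset_closure hx.1))⟩

theorem stmt16 (N : ℕ) (hN : 2 ≤ N)
    (Ω : Set (EuclideanSpace ℝ (Fin N))) (hΩopen : IsOpen Ω)
    (hΩconv : Convex ℝ Ω) (hΩbd : Bornology.IsBounded Ω)
    (u v : EuclideanSpace ℝ (Fin N) → ℝ)
    (hu : ContinuousOn u (closure Ω)) (hv : ContinuousOn v (closure Ω))
    (huc : ConvexOn ℝ (closure Ω) u) (hvc : ConvexOn ℝ (closure Ω) v)
    (hdom : ∀ e : Set (EuclideanSpace ℝ (Fin N)), e ⊆ Ω → MeasurableSet e →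
      volume (nmImage Ω v e) ≤ volume (nmImage Ω u e))
    (hbd : ∀ x ∈ frontier Ω, u x ≤ v x) :
    ∀ x ∈ Ω, u x ≤ v x :=
  stmt16_general N hN Ω hΩopen hΩbd u v hu hv huc hvc hdom hbd
end

section
/- Let u : Ω → ℝ be a continuous function on an open set Ω ⊂ ℝ^N, and define the normal mapping ∂u(x₀) = {p ∈ ℝ^N : u(x) ≥ u(x₀) + p·(x − x₀) for all x ∈ Ω} and ∂u(e) = ⋃_{x∈e} ∂u(x) for e ⊂ Ω. Then the class S = {e ⊂ Ω : ∂u(e) is Lebesgue measurable} is a Borel σ-algebra containing the Borel sets, and the set function Mu(e) = |∂u(e)| is a measure on S, finite on compact subsets of Ω. -/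
/-!
Continuity of `u` makes the normal image of a compact `K ⊆ Ω` compact: it is closed by a limiting
argument, and bounded because a slope `p` supporting `u` at `x` satisfies `δ ‖p‖ ≤ 2 sup |u|` on any
ball `closedBall x δ ⊆ Ω`. Open sets are σ-compact, so their normal images are measurable.

The key fact is that the slopes supporting `u` at two distinct points form a null set. On a compact
`K`, such a slope `p` is a point where the Lipschitz conjugate `p ↦ sup_{x ∈ K} (⟪x, p⟫ - u x)` has
two distinct subgradients, so it is not differentiable there, and Rademacher's theorem applies.
Hence normal images of disjoint sets are almost disjoint, which yields both the complement step of
the σ-algebra and countable additivity.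
-/

open Set MeasureTheory

open Function Metric Filter Topology
open scoped RealInnerProductSpace

variable {E : Type*} [NormedAddCommGroup E] [InnerProductSpace ℝ E]

def supportingSlopes (s : Set E) (u : E → ℝ) (x : E) : Set E :=
  {p | ∀ z ∈ s, u x + ⟪p, z - x⟫ ≤ u z}

def normalImage (s : Set E) (u : E → ℝ) (e : Set E) : Set E :=
  ⋃ x ∈ e, supportingSlopes s u x

def sharedSupportingSlopes (s : Set E) (u : E → ℝ) : Set E :=
  {p | ∃ x ∈ s, ∃ y ∈ s, x ≠ y ∧ p ∈ supportingSlopes s u x ∧ p ∈ supportingSlopes s u y}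

lemma nmImage_eq_normalImage {n : ℕ} (Ω : Set (EuclideanSpace ℝ (Fin n)))
    (u : EuclideanSpace ℝ (Fin n) → ℝ) (e : Set (EuclideanSpace ℝ (Fin n))) :
    nmImage Ω u e = normalImage Ω u e := by
  ext p
  simp [nmImage, normalImage, supportingSlopes]

lemma IsOpen.isSigmaCompact {X : Type*} [TopologicalSpace X] [LocallyCompactSpace X]
    [SecondCountableTopology X] {U : Set X} (hU : IsOpen U) : IsSigmaCompact U := by
  have := hU.locallyCompactSpace
  exact isSigmaCompact_iff_sigmaCompactSpace.mpr inferInstance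

section NormalImage

variable {s t e : Set E} {u : E → ℝ} {x : E}

lemma supportingSlopes_anti (h : t ⊆ s) : supportingSlopes s u x ⊆ supportingSlopes t u x :=
  fun _ hp z hz => hp z (h hz)

@[simp] lemma normalImage_empty : normalImage s u ∅ = ∅ := by simp [normalImage]

lemma normalImage_iUnion {ι : Sort*} (f : ι → Set E) :
    normalImage s u (⋃ i, f i) = ⋃ i, normalImage s u (f i) :=
  biUnion_iUnion f _

lemma normalImage_inter_normalImage_subset (he : e ⊆ s) (ht : t ⊆ s) (hd : Disjoint e t) :
    normalImage s u e ∩ normalImage s u t ⊆ sharedSupportingSlopes s u := by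
  simp only [normalImage, subset_def, mem_inter_iff, mem_iUnion₂]
  rintro p ⟨⟨x, hx, hpx⟩, y, hy, hpy⟩
  exact ⟨x, he hx, y, ht hy, hd.ne_of_mem hx hy, hpx, hpy⟩

lemma normalImage_sdiff :
    normalImage s u (s \ e) =
      (normalImage s u s \ normalImage s u e) ∪ (normalImage s u (s \ e) ∩ normalImage s u e) := by
  refine subset_antisymm (fun p hp => ?_) (union_subset ?_ inter_subset_left)
  · by_cases hpe : p ∈ normalImage s u e
    · exact Or.inr ⟨hp, hpe⟩
    · exact Or.inl ⟨biUnion_subset_biUnion_left sdiff_subset hp, hpe⟩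
  · simp only [normalImage, subset_def, Set.mem_sdiff, mem_iUnion₂, not_exists]
    rintro p ⟨⟨x, hx, hpx⟩, hpe⟩
    exact ⟨x, ⟨hx, fun hxe => hpe x hxe hpx⟩, hpx⟩

end NormalImage

section Compactness

variable {s K V : Set E} {u : E → ℝ} {x p : E}

lemma mul_norm_le_of_mem_supportingSlopes {δ C : ℝ} (hδ : 0 < δ) (hball : closedBall x δ ⊆ s)
    (hC : ∀ z ∈ closedBall x δ, |u z| ≤ C) (hp : p ∈ supportingSlopes s u x) :
    δ * ‖p‖ ≤ 2 * C := by
  have hux := abs_le.1 (hC x (mem_closedBall_self hδ.le))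
  rcases eq_or_ne p 0 with rfl | hp0
  · simp only [norm_zero, mul_zero]
    linarith
  have hpos : 0 < ‖p‖ := norm_pos_iff.2 hp0
  set z := x + (δ / ‖p‖) • p
  have hz : z ∈ closedBall x δ := by
    rw [mem_closedBall, dist_eq_norm, add_sub_cancel_left, norm_smul,
      Real.norm_of_nonneg (by positivity), div_mul_cancel₀ _ hpos.ne']
  have hinner : ⟪p, z - x⟫ = δ * ‖p‖ := by
    rw [add_sub_cancel_left, real_inner_smul_right, real_inner_self_eq_norm_sq]
    field_simp
  have huz := abs_le.1 (hC z hz)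
  linarith [hp z (hball hz)]

lemma isBounded_normalImage [ProperSpace E] (hs : IsOpen s) (hu : ContinuousOn u s)
    (hK : IsCompact K) (hKs : K ⊆ s) : Bornology.IsBounded (normalImage s u K) := by
  obtain ⟨δ, hδ, hthick⟩ := hK.exists_cthickening_subset_open hs hKs
  obtain ⟨C, hC⟩ := hK.cthickening.exists_bound_of_continuousOn (hu.mono hthick)
  refine (isBounded_closedBall (x := 0) (r := 2 * C / δ)).subset ?_
  simp only [normalImage, iUnion₂_subset_iff]
  intro x hx p hp
  have hball := closedBall_subset_cthickening hx δ
  rw [mem_closedBall_zero_iff, le_div_iff₀ hδ, mul_comm]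
  exact mul_norm_le_of_mem_supportingSlopes hδ (hball.trans hthick)
    (fun z hz => Real.norm_eq_abs (u z) ▸ hC z (hball hz)) hp

lemma isClosed_normalImage (hK : IsCompact K) (hu : ContinuousOn u K) :
    IsClosed (normalImage s u K) := by
  refine IsSeqClosed.isClosed fun q p hq hqp => ?_
  simp only [normalImage, mem_iUnion₂] at hq ⊢
  choose x hxK hx using hq
  obtain ⟨a, haK, φ, hφ, hxa⟩ := hK.tendsto_subseq hxK
  refine ⟨a, haK, fun z hz => le_of_tendsto_of_tendsto' (b := atTop) ?_ tendsto_const_nhds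
    fun k => hx (φ k) z hz⟩
  have hux : Tendsto (fun k => u (x (φ k))) atTop (𝓝 (u a)) :=
    (hu a haK).tendsto.comp (tendsto_nhdsWithin_iff.2 ⟨hxa, .of_forall fun k => hxK (φ k)⟩)
  exact hux.add ((hqp.comp hφ.tendsto_atTop).inner (tendsto_const_nhds.sub hxa))

lemma isCompact_normalImage [ProperSpace E] (hs : IsOpen s) (hu : ContinuousOn u s)
    (hK : IsCompact K) (hKs : K ⊆ s) : IsCompact (normalImage s u K) :=
  isCompact_of_isClosed_isBounded (isClosed_normalImage hK (hu.mono hKs))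
    (isBounded_normalImage hs hu hK hKs)

lemma measurableSet_normalImage [MeasurableSpace E] [OpensMeasurableSpace E]
    (hV : IsSigmaCompact V) (hu : ContinuousOn u V) : MeasurableSet (normalImage s u V) := by
  obtain ⟨K, hK, rfl⟩ := hV
  rw [normalImage_iUnion]
  exact .iUnion fun n => (isClosed_normalImage (hK n) (hu.mono (subset_iUnion K n))).measurableSet

end Compactness

lemma eq_fderiv_of_forall_add_le {F : Type*} [NormedAddCommGroup F] [NormedSpace ℝ F]
    {v : F → ℝ} {p : F} {ℓ : F →L[ℝ] ℝ} (hℓ : ∀ q, v p + ℓ (q - p) ≤ v q)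
    (hv : DifferentiableAt ℝ v p) : ℓ = fderiv ℝ v p := by
  have hmin : IsLocalMin (fun q => v q - ℓ q) p :=
    .of_forall fun q => by linarith [hℓ q, map_sub ℓ q p]
  have hderiv : HasFDerivAt (fun q => v q - ℓ q) (fderiv ℝ v p - ℓ) p :=
    hv.hasFDerivAt.sub ℓ.hasFDerivAt
  have h := hmin.fderiv_eq_zero
  rw [hderiv.fderiv, sub_eq_zero] at h
  exact h.symm

noncomputable def legendreOn (K : Set E) (u : E → ℝ) (p : E) : ℝ :=
  sSup ((fun x => ⟪x, p⟫ - u x) '' K)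

section Legendre

variable {K : Set E} {u : E → ℝ} {x y p : E}

lemma le_legendreOn (hK : IsCompact K) (hu : ContinuousOn u K) (hx : x ∈ K) :
    ⟪x, p⟫ - u x ≤ legendreOn K u p :=
  le_csSup (hK.image_of_continuousOn
    ((continuous_id.inner continuous_const).continuousOn.sub hu)).bddAbove (mem_image_of_mem _ hx)

lemma legendreOn_le {c : ℝ} (hne : K.Nonempty) (h : ∀ x ∈ K, ⟪x, p⟫ - u x ≤ c) :
    legendreOn K u p ≤ c :=
  csSup_le (hne.image _) (forall_mem_image.2 h)

lemma exists_lipschitzWith_legendreOn (hK : IsCompact K) (hu : ContinuousOn u K) :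
    ∃ C, LipschitzWith C (legendreOn K u) := by
  rcases K.eq_empty_or_nonempty with rfl | hne
  · exact ⟨0, by simp [legendreOn]⟩
  obtain ⟨R, hR⟩ := hK.isBounded.exists_norm_le
  refine ⟨_, LipschitzWith.of_le_add_mul' R fun p q => legendreOn_le hne fun x hx => ?_⟩
  have hxpq : ⟪x, p⟫ - ⟪x, q⟫ ≤ R * dist p q := by
    rw [← inner_sub_right, dist_eq_norm]
    exact (real_inner_le_norm x (p - q)).trans
      (mul_le_mul_of_nonneg_right (hR x hx) (norm_nonneg _))
  linarith [le_legendreOn (p := q) hK hu hx]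

lemma legendreOn_add_inner_le (hK : IsCompact K) (hu : ContinuousOn u K) (hx : x ∈ K)
    (hp : p ∈ supportingSlopes K u x) (q : E) :
    legendreOn K u p + ⟪x, q - p⟫ ≤ legendreOn K u q := by
  have hmax : legendreOn K u p ≤ ⟪x, p⟫ - u x := legendreOn_le ⟨x, hx⟩ fun z hz => by
    have := hp z hz
    rw [inner_sub_right, real_inner_comm z p, real_inner_comm x p] at this
    linarith
  rw [inner_sub_right]
  linarith [le_legendreOn (p := q) hK hu hx]

lemma eq_of_mem_supportingSlopes_of_differentiableAt (hK : IsCompact K) (hu : ContinuousOn u K)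
    (hx : x ∈ K) (hy : y ∈ K) (hpx : p ∈ supportingSlopes K u x)
    (hpy : p ∈ supportingSlopes K u y) (hd : DifferentiableAt ℝ (legendreOn K u) p) : x = y := by
  have hgrad : ∀ w ∈ K, p ∈ supportingSlopes K u w → innerSL ℝ w = fderiv ℝ (legendreOn K u) p :=
    fun w hw hpw => eq_fderiv_of_forall_add_le
      (fun q => by rw [innerSL_apply_apply]; exact legendreOn_add_inner_le hK hu hw hpw q) hd
  exact innerSL_inj.1 ((hgrad x hx hpx).trans (hgrad y hy hpy).symm)

end Legendre

section SharedSlopes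

variable [FiniteDimensional ℝ E] [MeasurableSpace E] [BorelSpace E] (μ : Measure E)
  [μ.IsAddHaarMeasure] {s K : Set E} {u : E → ℝ}

lemma measure_sharedSupportingSlopes_eq_zero_of_isCompact (hK : IsCompact K)
    (hu : ContinuousOn u K) : μ (sharedSupportingSlopes K u) = 0 := by
  obtain ⟨C, hC⟩ := exists_lipschitzWith_legendreOn hK hu
  refine measure_mono_null ?_ (ae_iff.1 (hC.ae_differentiableAt (μ := μ)))
  rintro p ⟨x, hx, y, hy, hxy, hpx, hpy⟩ hd
  exact hxy (eq_of_mem_supportingSlopes_of_differentiableAt hK hu hx hy hpx hpy hd)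

lemma measure_sharedSupportingSlopes_eq_zero (hs : IsSigmaCompact s) (hu : ContinuousOn u s) :
    μ (sharedSupportingSlopes s u) = 0 := by
  obtain ⟨K, hK, rfl⟩ := hs
  have hsub : sharedSupportingSlopes (⋃ n, K n) u ⊆
      ⋃ m, ⋃ n, sharedSupportingSlopes (K m ∪ K n) u := by
    rintro p ⟨x, hx, y, hy, hxy, hpx, hpy⟩
    obtain ⟨m, hxm⟩ := mem_iUnion.1 hx
    obtain ⟨n, hyn⟩ := mem_iUnion.1 hy
    have hmn : K m ∪ K n ⊆ ⋃ n, K n := union_subset (subset_iUnion K m) (subset_iUnion K n)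
    exact mem_iUnion₂.2 ⟨m, n, x, .inl hxm, y, .inr hyn, hxy,
      supportingSlopes_anti hmn hpx, supportingSlopes_anti hmn hpy⟩
  refine measure_mono_null hsub (measure_iUnion_null fun m => measure_iUnion_null fun n => ?_)
  exact measure_sharedSupportingSlopes_eq_zero_of_isCompact μ ((hK m).union (hK n))
    (hu.mono (union_subset (subset_iUnion K m) (subset_iUnion K n)))

end SharedSlopes

section MongeAmpereMeasure

variable [MeasurableSpace E] {μ : Measure E} {s e : Set E} {u : E → ℝ}

lemma nullMeasurableSet_normalImage_sdiff (hnull : μ (sharedSupportingSlopes s u) = 0)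
    (hs : NullMeasurableSet (normalImage s u s) μ) (he : NullMeasurableSet (normalImage s u e) μ)
    (hes : e ⊆ s) : NullMeasurableSet (normalImage s u (s \ e)) μ := by
  rw [normalImage_sdiff]
  exact (hs.diff he).union <| .of_null <| measure_mono_null
    (normalImage_inter_normalImage_subset sdiff_subset hes disjoint_sdiff_left) hnull

lemma nullMeasurableSet_normalImage_inter [FiniteDimensional ℝ E] [BorelSpace E] (hs : IsOpen s)
    (hu : ContinuousOn u s) (hnull : μ (sharedSupportingSlopes s u) = 0) {t : Set E}
    (ht : MeasurableSet t) : NullMeasurableSet (normalImage s u (t ∩ s)) μ := by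
  induction t, ht using MeasurableSet.induction_on_open with
  | isOpen U hU =>
    exact (measurableSet_normalImage (hU.inter hs).isSigmaCompact
      (hu.mono inter_subset_right)).nullMeasurableSet
  | compl t _ ht =>
    rw [← sdiff_eq_compl_inter, ← sdiff_inter_self_eq_sdiff]
    exact nullMeasurableSet_normalImage_sdiff hnull
      (measurableSet_normalImage hs.isSigmaCompact hu).nullMeasurableSet ht inter_subset_right
  | iUnion f _ _ hf =>
    rw [iUnion_inter, normalImage_iUnion]
    exact .iUnion hf

lemma measure_normalImage_iUnion (hnull : μ (sharedSupportingSlopes s u) = 0)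
    {f : ℕ → Set E} (hfs : ∀ i, f i ⊆ s) (hf : ∀ i, NullMeasurableSet (normalImage s u (f i)) μ)
    (hd : Pairwise (Disjoint on f)) :
    μ (normalImage s u (⋃ i, f i)) = ∑' i, μ (normalImage s u (f i)) := by
  rw [normalImage_iUnion]
  exact measure_iUnion₀ (fun i j hij => measure_mono_null
    (normalImage_inter_normalImage_subset (hfs i) (hfs j) (hd hij)) hnull) hf

end MongeAmpereMeasure

theorem stmt17_general (N : ℕ)
    (Ω : Set (EuclideanSpace ℝ (Fin N))) (hΩopen : IsOpen Ω)
    (u : EuclideanSpace ℝ (Fin N) → ℝ) (hu : ContinuousOn u Ω) :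
    -- the class `S` of sets `e ⊆ Ω` with `∂u(e)` Lebesgue measurable
    letI S : Set (Set (EuclideanSpace ℝ (Fin N))) :=
      {e | e ⊆ Ω ∧ NullMeasurableSet (nmImage Ω u e) volume}
    -- `S` is a σ-algebra of subsets of `Ω`
    (∅ ∈ S) ∧ (Ω ∈ S) ∧
    (∀ e ∈ S, Ω \ e ∈ S) ∧
    (∀ f : ℕ → Set (EuclideanSpace ℝ (Fin N)), (∀ i, f i ∈ S) → (⋃ i, f i) ∈ S) ∧
    -- `S` contains the Borel subsets of `Ω`
    (∀ e : Set (EuclideanSpace ℝ (Fin N)), e ⊆ Ω → MeasurableSet e → e ∈ S) ∧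
    -- `Mu(e) = |∂u(e)|` is countably additive on `S`
    (volume (nmImage Ω u (∅ : Set (EuclideanSpace ℝ (Fin N)))) = 0) ∧
    (∀ f : ℕ → Set (EuclideanSpace ℝ (Fin N)), (∀ i, f i ∈ S) →
      Pairwise (Function.onFun Disjoint f) →
      volume (nmImage Ω u (⋃ i, f i)) = ∑' i, volume (nmImage Ω u (f i))) ∧
    -- `Mu` is finite on compact subsets of `Ω`
    (∀ K : Set (EuclideanSpace ℝ (Fin N)), K ⊆ Ω → IsCompact K →
      volume (nmImage Ω u K) < ⊤) := by
  simp only [mem_ofPred_eq, nmImage_eq_normalImage]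
  have hnull := measure_sharedSupportingSlopes_eq_zero volume hΩopen.isSigmaCompact hu
  have hΩ : NullMeasurableSet (normalImage Ω u Ω) volume :=
    (measurableSet_normalImage hΩopen.isSigmaCompact hu).nullMeasurableSet
  refine ⟨by simp, ⟨subset_rfl, hΩ⟩, fun e he => ⟨sdiff_subset, ?_⟩, fun f hf => ⟨?_, ?_⟩,
    fun e heΩ he => ⟨heΩ, ?_⟩, by simp, fun f hf hd => ?_, fun K hKΩ hK => ?_⟩
  · exact nullMeasurableSet_normalImage_sdiff hnull hΩ he.2 he.1
  · exact iUnion_subset fun i => (hf i).1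
  · rw [normalImage_iUnion]
    exact .iUnion fun i => (hf i).2
  · simpa [inter_eq_left.2 heΩ] using nullMeasurableSet_normalImage_inter hΩopen hu hnull he
  · exact measure_normalImage_iUnion hnull (fun i => (hf i).1) (fun i => (hf i).2) hd
  · exact (isCompact_normalImage hΩopen hu hK hKΩ).measure_lt_top

theorem stmt17 (N : ℕ) (hN : 1 ≤ N)
    (Ω : Set (EuclideanSpace ℝ (Fin N))) (hΩopen : IsOpen Ω)
    (u : EuclideanSpace ℝ (Fin N) → ℝ) (hu : ContinuousOn u Ω) :
    -- the class `S` of sets `e ⊆ Ω` with `∂u(e)` Lebesgue measurable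
    letI S : Set (Set (EuclideanSpace ℝ (Fin N))) :=
      {e | e ⊆ Ω ∧ NullMeasurableSet (nmImage Ω u e) volume}
    -- `S` is a σ-algebra of subsets of `Ω`
    (∅ ∈ S) ∧ (Ω ∈ S) ∧
    (∀ e ∈ S, Ω \ e ∈ S) ∧
    (∀ f : ℕ → Set (EuclideanSpace ℝ (Fin N)), (∀ i, f i ∈ S) → (⋃ i, f i) ∈ S) ∧
    -- `S` contains the Borel subsets of `Ω`
    (∀ e : Set (EuclideanSpace ℝ (Fin N)), e ⊆ Ω → MeasurableSet e → e ∈ S) ∧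
    -- `Mu(e) = |∂u(e)|` is countably additive on `S`
    (volume (nmImage Ω u (∅ : Set (EuclideanSpace ℝ (Fin N)))) = 0) ∧
    (∀ f : ℕ → Set (EuclideanSpace ℝ (Fin N)), (∀ i, f i ∈ S) →
      Pairwise (Function.onFun Disjoint f) →
      volume (nmImage Ω u (⋃ i, f i)) = ∑' i, volume (nmImage Ω u (f i))) ∧
    -- `Mu` is finite on compact subsets of `Ω`
    (∀ K : Set (EuclideanSpace ℝ (Fin N)), K ⊆ Ω → IsCompact K →
      volume (nmImage Ω u K) < ⊤) :=
  stmt17_general N Ω hΩopen u hu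
end
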